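/- arXiv:1306.5036 — 9 statements merged into one kernel-verified Lean document; each statement's English description precedes it below -/
import Mathlib

section
/- For nonzero integers a, b, c, there exist integers x, y such that a*x + b*y = gcd(a,b) and gcd(x, gcd(a,b)) = 1. -/
/-- If `u` and `n` are coprime integers, then some term `u + t * n` of the arithmetic
progression is coprime to a given nonzero natural number `m`. -/
lemma aux_exists_coprime (u n : ℤ) (h : IsCoprime u n) (m : ℕ) (hm : m ≠ 0) :
    ∃ t : ℤ, Int.gcd (u + t * n) m = 1 := by
  classical
  set P : ℕ := (m.primeFactors.filter (fun p : ℕ => ¬ (p : ℤ) ∣ u)).prod id with hP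
  refine ⟨(P : ℤ), ?_⟩
  set x : ℤ := u + (P : ℤ) * n with hxdef
  rw [Int.gcd, Int.natAbs_natCast]
  apply Nat.coprime_of_dvd
  intro p pp hpx hpm
  have hpx' : (p : ℤ) ∣ x := Int.natAbs_dvd_natAbs.mp (by simpa using hpx)
  by_cases hpu : (p : ℤ) ∣ u
  · have hpn : ¬ (p : ℤ) ∣ n := by
      intro hpn
      have hunit : IsUnit (p : ℤ) := h.isUnit_of_dvd' hpu hpn
      rw [Int.isUnit_iff] at hunit
      have := pp.two_le
      omega
    have hpP : ¬ p ∣ P := by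
      intro hd
      obtain ⟨q, hq, hq'⟩ := (pp.prime.dvd_finset_prod_iff id).mp hd
      rw [Finset.mem_filter] at hq
      have : p = q :=
        (Nat.prime_dvd_prime_iff_eq pp (Nat.prime_of_mem_primeFactors hq.1)).mp hq'
      exact hq.2 (this ▸ hpu)
    have hPn : (p : ℤ) ∣ (P : ℤ) * n := by
      have := dvd_sub hpx' hpu
      simpa [hxdef] using this
    rcases (Nat.prime_iff_prime_int.mp pp).2.2 _ _ hPn with h1 | h1
    · exact hpP (Int.natCast_dvd_natCast.mp h1)
    · exact hpn h1
  · have hp_in : p ∈ m.primeFactors.filter (fun p : ℕ => ¬ (p : ℤ) ∣ u) :=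
      Finset.mem_filter.mpr ⟨Nat.mem_primeFactors.mpr ⟨pp, hpm, hm⟩, hpu⟩
    have hpP : p ∣ P := Finset.dvd_prod_of_mem id hp_in
    have : (p : ℤ) ∣ u := by
      have h2 : (p : ℤ) ∣ (P : ℤ) * n := (Int.natCast_dvd_natCast.mpr hpP).mul_right n
      have := dvd_sub hpx' h2
      simpa [hxdef] using this
    exact hpu this

/-- For nonzero integers `a, b, c`, there exist integers `x, y` with
`a*x + b*y = gcd(a,b)` and `gcd(x, gcd(a,b)) = 1`. -/
theorem stmt_1 (a b c : ℤ) (ha : a ≠ 0) (hb : b ≠ 0) (hc : c ≠ 0) :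
    ∃ x y : ℤ, a * x + b * y = Int.gcd a b ∧ Int.gcd x (Int.gcd a b) = 1 := by
  have hgnat : Int.gcd a b ≠ 0 := fun h => ha (Int.gcd_eq_zero_iff.mp h).1
  set g : ℤ := (Int.gcd a b : ℤ) with hg
  have hg0 : g ≠ 0 := Int.natCast_ne_zero.mpr hgnat
  obtain ⟨a', ha'⟩ := Int.gcd_dvd_left (a := a) (b := b)
  obtain ⟨b', hb'⟩ := Int.gcd_dvd_right (a := a) (b := b)
  set u := Int.gcdA a b with hu
  set v := Int.gcdB a b with hv
  have hbez : g = a * u + b * v := Int.gcd_eq_gcd_ab a b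
  have h1 : a' * u + b' * v = 1 := by
    apply mul_left_cancel₀ hg0
    rw [mul_one]
    calc g * (a' * u + b' * v) = a * u + b * v := by linear_combination -u * ha' - v * hb'
    _ = g := hbez.symm
  have hcop : IsCoprime u b' := ⟨a', v, by linarith⟩
  obtain ⟨t, ht⟩ := aux_exists_coprime u b' hcop (Int.gcd a b) hgnat
  refine ⟨u + t * b', v - t * a', ?_, ht⟩
  linear_combination (u + t * b') * ha' + (v - t * a') * hb' + g * h1
end

section
/- Let a₁, a₂ be positive integers and m₀, m₁ be positive integers, and let g = gcd(m₀, m₁). Then the cokernel of the ℤ-linear map ℤ² → ℤ² given by the matrix [[-m₀·a₁, m₁], [-m₀·a₂, 0]] is isomorphic to ℤ/gℤ ⊕ ℤ/((m₀·m₁·a₂)/g)ℤ. -/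
open Matrix

lemma ap_coprime (A B n : ℕ) (hA : 0 < A) (hn : 0 < n)
    (h : Nat.Coprime (Nat.gcd A B) n) : ∃ k : ℕ, Nat.Coprime (A + k * B) n := by
  have hn0 : n ≠ 0 := hn.ne'
  have hA0 : A ≠ 0 := hA.ne'
  have hApow : A ^ n ≠ 0 := pow_ne_zero _ hA0
  set d := Nat.gcd n (A ^ n) with hd
  have hdn : d ∣ n := Nat.gcd_dvd_left _ _
  have hdpos : 0 < d := Nat.gcd_pos_of_pos_left _ hn
  refine ⟨n / d, ?_⟩
  set k := n / d with hk
  have hkpos : 0 < k := Nat.div_pos (Nat.le_of_dvd hn hdn) hdpos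
  rw [Nat.Coprime]
  by_contra hne
  obtain ⟨p, pp, hpdvd⟩ := Nat.exists_prime_and_dvd hne
  have hpAB : p ∣ A + k * B := hpdvd.trans (Nat.gcd_dvd_left _ _)
  have hpn : p ∣ n := hpdvd.trans (Nat.gcd_dvd_right _ _)
  have hkfact : k.factorization p = n.factorization p - d.factorization p := by
    rw [hk, Nat.factorization_div hdn, Finsupp.tsub_apply]
  by_cases hpA : p ∣ A
  · have hpB : ¬ p ∣ B := by
      intro hB
      have h1 : p ∣ Nat.gcd (Nat.gcd A B) n := Nat.dvd_gcd (Nat.dvd_gcd hpA hB) hpn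
      rw [h] at h1
      exact pp.one_lt.ne' (Nat.eq_one_of_dvd_one h1 ▸ rfl)
    have hdfact : d.factorization p = n.factorization p := by
      rw [hd, Nat.factorization_gcd hn0 hApow, Finsupp.inf_apply, Nat.factorization_pow]
      simp only [Finsupp.smul_apply, smul_eq_mul]
      have h1 : 1 ≤ A.factorization p :=
        (Nat.Prime.dvd_iff_one_le_factorization pp hA0).mp hpA
      have h2 : n.factorization p < n := Nat.factorization_lt p hn0
      exact min_eq_left (le_trans h2.le (Nat.le_mul_of_pos_right n h1))
    have hpk : ¬ p ∣ k := by
      intro hpk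
      have h3 := (Nat.Prime.dvd_iff_one_le_factorization pp hkpos.ne').mp hpk
      omega
    rcases (Nat.Prime.dvd_mul pp).mp ((Nat.dvd_add_right hpA).mp hpAB) with h' | h'
    exacts [hpk h', hpB h']
  · have hdfact : d.factorization p = 0 := by
      rw [hd, Nat.factorization_gcd hn0 hApow, Finsupp.inf_apply, Nat.factorization_pow]
      simp [Nat.factorization_eq_zero_of_not_dvd hpA]
    have hpk : p ∣ k := by
      rw [Nat.Prime.dvd_iff_one_le_factorization pp hkpos.ne', hkfact, hdfact]
      have := (Nat.Prime.dvd_iff_one_le_factorization pp hn0).mp hpn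
      omega
    exact hpA ((Nat.dvd_add_iff_left (hpk.mul_right B)).mpr hpAB)

/-- For positive integers `a₁, a₂` (with `gcd(a₁,a₂)=1`) and positive `m₀, m₁`, with
`g = gcd(m₀,m₁)`, the cokernel of the map `ℤ² → ℤ²` given by the matrix
`[[-m₀a₁, m₁],[-m₀a₂, 0]]` is isomorphic to `ℤ/gℤ ⊕ ℤ/((m₀m₁a₂)/g)ℤ`. -/
theorem stmt_3 (a₁ a₂ m₀ m₁ : ℕ) (ha₁ : 0 < a₁) (ha₂ : 0 < a₂)
    (hm₀ : 0 < m₀) (hm₁ : 0 < m₁) (hprim : Nat.gcd a₁ a₂ = 1)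
    (g : ℕ) (hg : g = Nat.gcd m₀ m₁) :
    Nonempty (((Fin 2 → ℤ) ⧸ LinearMap.range
        (Matrix.toLin' !![-(m₀ * a₁ : ℤ), (m₁ : ℤ); -(m₀ * a₂ : ℤ), 0]))
      ≃+ (ZMod g × ZMod (m₀ * m₁ * a₂ / g))) := by
  have hgpos : 0 < g := by rw [hg]; exact Nat.gcd_pos_of_pos_left _ hm₀
  obtain ⟨m₀', rfl⟩ : g ∣ m₀ := by rw [hg]; exact Nat.gcd_dvd_left _ _
  obtain ⟨m₁', rfl⟩ : g ∣ m₁ := by rw [hg]; exact Nat.gcd_dvd_right _ _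
  have hm₀' : 0 < m₀' := by by_contra h; simp [Nat.le_zero.mp (not_lt.mp h)] at hm₀
  have hm₁' : 0 < m₁' := by by_contra h; simp [Nat.le_zero.mp (not_lt.mp h)] at hm₁
  have h01 : Nat.Coprime m₀' m₁' := by
    have h := Nat.coprime_div_gcd_div_gcd (m := g * m₀') (n := g * m₁') (by rw [← hg]; exact hgpos)
    rw [← hg, Nat.mul_div_cancel_left _ hgpos, Nat.mul_div_cancel_left _ hgpos] at h
    exact h
  -- coprimality hypothesis for the arithmetic-progression lemma
  have hAP : Nat.Coprime (Nat.gcd (m₀' * a₁) m₁') (m₀' * a₂) := by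
    have hd1 : Nat.gcd (m₀' * a₁) m₁' ∣ m₁' := Nat.gcd_dvd_right _ _
    have hdm : Nat.Coprime (Nat.gcd (m₀' * a₁) m₁') m₀' :=
      Nat.Coprime.coprime_dvd_left hd1 h01.symm
    have hda : Nat.gcd (m₀' * a₁) m₁' ∣ a₁ :=
      hdm.dvd_of_dvd_mul_left (by rw [mul_comm] at *; exact Nat.gcd_dvd_left _ _)
    exact Nat.Coprime.mul_right hdm (Nat.Coprime.coprime_dvd_left hda hprim)
  obtain ⟨k, hkcop⟩ := ap_coprime (m₀' * a₁) m₁' (m₀' * a₂)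
    (by positivity) (by positivity) hAP
  obtain ⟨DD, CC, hB0⟩ := Nat.isCoprime_iff_coprime.mpr hkcop
  have hB : DD * ((m₀' : ℤ) * a₁ + (k : ℤ) * m₁') + CC * ((m₀' : ℤ) * a₂) = 1 := by
    push_cast at hB0
    linear_combination hB0
  -- rewrite the ZMod modulus
  have hdiv : g * m₀' * (g * m₁') * a₂ / g = g * (m₀' * m₁' * a₂) := by
    rw [show g * m₀' * (g * m₁') * a₂ = g * (g * (m₀' * m₁' * a₂)) by ring,
      Nat.mul_div_cancel_left _ hgpos]
  rw [hdiv]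
  set nN : ℕ := g * (m₀' * m₁' * a₂) with hnN
  -- the linear map to the product of ZMod's
  set ℓ : (Fin 2 → ℤ) →+ (ZMod g × ZMod nN) :=
    { toFun := fun v => (((DD * v 0 + CC * v 1 : ℤ) : ZMod g),
        (((-((m₀' : ℤ) * a₂)) * v 0 + ((m₀' : ℤ) * a₁ + (k : ℤ) * m₁') * v 1 : ℤ) : ZMod nN)),
      map_zero' := by simp
      map_add' := by
        intro v w
        refine Prod.ext ?_ ?_ <;> simp only [Pi.add_apply, Prod.fst_add, Prod.snd_add] <;>
          push_cast <;> ring } with hℓ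
  have hker : LinearMap.range (Matrix.toLin'
      !![-((g * m₀' : ℕ) * a₁ : ℤ), ((g * m₁' : ℕ) : ℤ); -((g * m₀' : ℕ) * a₂ : ℤ), 0])
      ≤ LinearMap.ker ℓ.toIntLinearMap := by
    rintro _ ⟨w, rfl⟩
    rw [LinearMap.mem_ker]
    refine Prod.ext ?_ ?_
    · show ((DD * _ + CC * _ : ℤ) : ZMod g) = 0
      rw [ZMod.intCast_zmod_eq_zero_iff_dvd]
      refine ⟨(m₀' : ℤ) * w 0 * (-DD * a₁ - CC * a₂) + DD * m₁' * w 1, ?_⟩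
      simp [Matrix.toLin'_apply, Matrix.mulVec, dotProduct, Fin.sum_univ_two]
      ring
    · show (((-((m₀' : ℤ) * a₂)) * _ + _ * _ : ℤ) : ZMod nN) = 0
      rw [ZMod.intCast_zmod_eq_zero_iff_dvd]
      refine ⟨-((k : ℤ) * w 0 + w 1), ?_⟩
      simp [Matrix.toLin'_apply, Matrix.mulVec, dotProduct, Fin.sum_univ_two, hnN]
      ring
  set ψ := Submodule.liftQ _ ℓ.toIntLinearMap hker with hψ
  have hcore : LinearMap.ker ℓ.toIntLinearMap ≤ LinearMap.range (Matrix.toLin'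
      !![-((g * m₀' : ℕ) * a₁ : ℤ), ((g * m₁' : ℕ) : ℤ); -((g * m₀' : ℕ) * a₂ : ℤ), 0]) := by
    intro v hv
    rw [LinearMap.mem_ker] at hv
    have h1 : ((DD * v 0 + CC * v 1 : ℤ) : ZMod g) = 0 := congrArg Prod.fst hv
    have h2 : (((-((m₀' : ℤ) * a₂)) * v 0 + ((m₀' : ℤ) * a₁ + (k : ℤ) * m₁') * v 1 : ℤ)
        : ZMod nN) = 0 := congrArg Prod.snd hv
    rw [ZMod.intCast_zmod_eq_zero_iff_dvd] at h1 h2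
    obtain ⟨i, hi⟩ := h1
    obtain ⟨j, hj⟩ := h2
    rw [hnN] at hj
    push_cast at hj
    refine ⟨![-i - j * (m₁' : ℤ) * DD, i * k + j * ((m₀' : ℤ) * (a₂ * (-CC) - a₁ * DD))], ?_⟩
    funext x
    fin_cases x <;>
      simp [Matrix.toLin'_apply, Matrix.mulVec, dotProduct, Fin.sum_univ_two]
    · linear_combination (-((m₀' : ℤ) * a₁ + (k : ℤ) * m₁')) * hi + CC * hj + (v 0) * hB
    · linear_combination (-((m₀' : ℤ) * a₂)) * hi + (-DD) * hj + (v 1) * hB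
  have hinj : Function.Injective ψ := by
    rw [← LinearMap.ker_eq_bot, hψ]
    exact Submodule.ker_liftQ_eq_bot _ _ _ hcore
  have hsurj : Function.Surjective ψ := by
    intro z
    obtain ⟨i, hi⟩ := ZMod.intCast_surjective z.1
    obtain ⟨j, hj⟩ := ZMod.intCast_surjective z.2
    refine ⟨Submodule.Quotient.mk
      ![i * ((m₀' : ℤ) * a₁ + (k : ℤ) * m₁') + j * (-CC), i * ((m₀' : ℤ) * a₂) + j * DD], ?_⟩
    rw [hψ, Submodule.liftQ_apply]
    refine Prod.ext ?_ ?_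
    · show ((DD * _ + CC * _ : ℤ) : ZMod g) = z.1
      rw [← hi]
      refine congrArg (Int.cast : ℤ → ZMod g) ?_
      simp only [Matrix.cons_val_zero, Matrix.cons_val_one, Matrix.head_cons]
      linear_combination i * hB
    · show (((-((m₀' : ℤ) * a₂)) * _ + _ * _ : ℤ) : ZMod nN) = z.2
      rw [← hj]
      refine congrArg (Int.cast : ℤ → ZMod nN) ?_
      simp only [Matrix.cons_val_zero, Matrix.cons_val_one, Matrix.head_cons]
      linear_combination j * hB
  exact ⟨(LinearEquiv.ofBijective ψ ⟨hinj, hsurj⟩).toAddEquiv⟩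
end

section
/- Let β : ℤ^(d+1) → ℤ^d be the homomorphism given by β(e₀) = -m₀·(a₁,…,a_d) and β(e_j) = m_j·ε_j for j = 1,…,d, where ε_j are the standard basis vectors, the m_i are positive integers, and (a₁,…,a_d) is a vector of positive integers. Then the cokernel of β is isomorphic to the quotient of ⨁_{i=0}^{d} ℤ/m_iℤ by the cyclic subgroup generated by (1 mod m₀, a₁ mod m₁, …, a_d mod m_d). -/
open Matrix

/-- The homomorphism `β : ℤ^(d+1) → ℤ^d` of a labelled sheared simplex, as a matrix:
`β(e₀) = -m₀·(a₁,…,a_d)` and `β(e_j) = m_j·ε_j` for `j = 1,…,d`. -/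
def shearedMatrix (d : ℕ) (m : Fin (d + 1) → ℕ) (a : Fin d → ℕ) :
    Matrix (Fin d) (Fin (d + 1)) ℤ :=
  fun i j => if j = 0 then -((m 0 : ℤ) * (a i : ℤ)) else if j = i.succ then (m j : ℤ) else 0

/-- The element `(1 mod m₀, a₁ mod m₁, …, a_d mod m_d)` of `⨁ ℤ/m_iℤ`. -/
def shearedGen (d : ℕ) (m : Fin (d + 1) → ℕ) (a : Fin d → ℕ) :
    ∀ j : Fin (d + 1), ZMod (m j) :=
  fun j => Fin.cases (motive := fun j => ZMod (m j)) (1 : ZMod (m 0))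
    (fun i => (a i : ZMod (m i.succ))) j

/-!
The map `ℤ^d → ⨁ ℤ/m_jℤ`, `x ↦ (0, x₁ mod m₁, …, x_d mod m_d)`, becomes surjective modulo
the generator `g = (1, a₁, …, a_d)`, since `g` has first coordinate `1`. An element `x` lands
in `⟨g⟩` exactly when `x ≡ n·(a₁, …, a_d)` coordinatewise for some `n ≡ 0 mod m₀`, and
writing `n = -m₀ c₀` this is the statement that `x = β c`.
-/

namespace ShearedSimplex

variable {d : ℕ} (m : Fin (d + 1) → ℕ) (a : Fin d → ℕ)

theorem shearedMatrix_mulVec_apply (c : Fin (d + 1) → ℤ) (i : Fin d) :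
    (shearedMatrix d m a *ᵥ c) i = -((m 0 : ℤ) * a i) * c 0 + (m i.succ : ℤ) * c i.succ := by
  rw [mulVec, dotProduct, Fin.sum_univ_succ, Finset.sum_eq_single i]
  · simp [shearedMatrix, Fin.succ_ne_zero]
  · intro j _ hj
    simp [shearedMatrix, Fin.succ_ne_zero, (Fin.succ_injective d).ne hj]
  · simp

theorem mem_range_shearedMatrix_iff (x : Fin d → ℤ) :
    x ∈ LinearMap.range (toLin' (shearedMatrix d m a)) ↔
      ∃ n : ℤ, (m 0 : ℤ) ∣ n ∧ ∀ i, (m i.succ : ℤ) ∣ x i - n * a i := by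
  simp only [LinearMap.mem_range, toLin'_apply, funext_iff, shearedMatrix_mulVec_apply]
  constructor
  · rintro ⟨c, hc⟩
    refine ⟨-(m 0 * c 0), ⟨-c 0, by ring⟩, fun i => ⟨c i.succ, ?_⟩⟩
    rw [← hc]
    ring
  · rintro ⟨_, ⟨s, rfl⟩, hx⟩
    choose t ht using hx
    refine ⟨Fin.cons (-s) t, fun i => ?_⟩
    simp only [Fin.cons_zero, Fin.cons_succ]
    linear_combination -(ht i)

def castTail : (Fin d → ℤ) →+ ∀ j : Fin (d + 1), ZMod (m j) where
  toFun x := Fin.cons (α := fun j => ZMod (m j)) 0 fun i => (x i : ZMod (m i.succ))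
  map_zero' := by
    funext j
    cases j using Fin.cases <;> simp
  map_add' x y := by
    funext j
    cases j using Fin.cases <;> simp

theorem zsmul_shearedGen_eq_castTail_iff (x : Fin d → ℤ) (n : ℤ) :
    n • shearedGen d m a = castTail m x ↔
      (m 0 : ℤ) ∣ n ∧ ∀ i, (m i.succ : ℤ) ∣ x i - n * a i := by
  simp only [funext_iff, Fin.forall_fin_succ, ← ZMod.intCast_zmod_eq_zero_iff_dvd]
  simp [castTail, shearedGen, sub_eq_zero, eq_comm]

theorem surjective_mk_comp_castTail :
    Function.Surjective (QuotientAddGroup.mk' (AddSubgroup.closure {shearedGen d m a}) ∘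
      castTail m) := by
  intro q
  obtain ⟨p, rfl⟩ := QuotientAddGroup.mk'_surjective _ q
  obtain ⟨n, hn⟩ := ZMod.intCast_surjective (p 0)
  choose x hx using fun i : Fin d ↦
    ZMod.intCast_surjective (p i.succ - n • shearedGen d m a i.succ)
  have hcast : castTail m x = p - n • shearedGen d m a := by
    funext j
    cases j using Fin.cases <;> simp [castTail, shearedGen, hn, hx]
  refine ⟨x, (QuotientAddGroup.mk'_eq_mk' _).2 ⟨n • shearedGen d m a, ?_, ?_⟩⟩
  · exact AddSubgroup.zsmul_mem _ (AddSubgroup.mem_closure_singleton_self _) n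
  · rw [hcast, sub_add_cancel]

end ShearedSimplex

theorem stmt_4_general (d : ℕ) (m : Fin (d + 1) → ℕ) (a : Fin d → ℕ) :
    Nonempty (((Fin d → ℤ) ⧸ LinearMap.range (Matrix.toLin' (shearedMatrix d m a)))
      ≃+ ((∀ j : Fin (d + 1), ZMod (m j)) ⧸ AddSubgroup.closure {shearedGen d m a})) := by
  set φ := (QuotientAddGroup.mk' (AddSubgroup.closure {shearedGen d m a})).comp
    (ShearedSimplex.castTail m)
  have hker : (LinearMap.range (toLin' (shearedMatrix d m a))).toAddSubgroup = φ.ker := by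
    ext x
    rw [Submodule.mem_toAddSubgroup, ShearedSimplex.mem_range_shearedMatrix_iff,
      AddMonoidHom.mem_ker, AddMonoidHom.comp_apply, QuotientAddGroup.mk'_apply,
      QuotientAddGroup.eq_zero_iff, AddSubgroup.mem_closure_singleton]
    simp only [ShearedSimplex.zsmul_shearedGen_eq_castTail_iff]
  exact ⟨(QuotientAddGroup.quotientAddEquivOfEq hker).trans
    (QuotientAddGroup.quotientKerEquivOfSurjective φ
      (ShearedSimplex.surjective_mk_comp_castTail m a))⟩

/-- The cokernel of the homomorphism of a labelled sheared simplex is isomorphic to the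
quotient of `⨁_{i=0}^d ℤ/m_iℤ` by the cyclic subgroup generated by
`(1 mod m₀, a₁ mod m₁, …, a_d mod m_d)`. -/
theorem stmt_4 (d : ℕ) (m : Fin (d + 1) → ℕ) (a : Fin d → ℕ)
    (hm : ∀ i, 0 < m i) (ha : ∀ i, 0 < a i) :
    Nonempty (((Fin d → ℤ) ⧸ LinearMap.range (Matrix.toLin' (shearedMatrix d m a)))
      ≃+ ((∀ j : Fin (d + 1), ZMod (m j)) ⧸ AddSubgroup.closure {shearedGen d m a})) :=
  stmt_4_general d m a
end

section
/- Let m₀,…,m_d and a₁,…,a_d be positive integers, and set M = m₀m₁⋯m_d. Then gcd(M/m₀, M·a₁/m₁, …, M·a_d/m_d) = 1 if and only if gcd(m_i, m_j) = 1 for all i ≠ j in {0,…,d} and gcd(a_i, m_i) = 1 for all i in {1,…,d}. -/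
/-- For positive integers `m₀,…,m_d`, `a₁,…,a_d` with `M = ∏ m_i`, one has
`gcd(M/m₀, M·a₁/m₁, …, M·a_d/m_d) = 1` iff the `m_i` are pairwise coprime and
`gcd(a_i, m_i) = 1` for all `i = 1,…,d`. -/
theorem stmt_6 (d : ℕ) (m : Fin (d + 1) → ℕ) (a : Fin d → ℕ)
    (hm : ∀ i, 0 < m i) (ha : ∀ i, 0 < a i)
    (M : ℕ) (hM : M = ∏ i, m i) :
    Nat.gcd (M / m 0) (Finset.univ.gcd (fun i : Fin d => M * a i / m i.succ)) = 1
      ↔ ((∀ i j, i ≠ j → Nat.Coprime (m i) (m j)) ∧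
          ∀ i : Fin d, Nat.Coprime (a i) (m i.succ)) := by
  set P : Fin (d + 1) → ℕ := fun k => ∏ j ∈ Finset.univ.erase k, m j with hP
  have hMk : ∀ k, M = m k * P k := fun k => by
    rw [hM, hP]
    exact (Finset.mul_prod_erase _ _ (Finset.mem_univ k)).symm
  have hdiv0 : M / m 0 = P 0 := by
    rw [hMk 0, Nat.mul_div_cancel_left _ (hm 0)]
  have hdivi : ∀ i : Fin d, M * a i / m i.succ = a i * P i.succ := fun i => by
    rw [hMk i.succ, mul_assoc, Nat.mul_div_cancel_left _ (hm i.succ), mul_comm]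
  have hmdvdP : ∀ j k : Fin (d + 1), j ≠ k → m j ∣ P k := fun j k hjk =>
    Finset.dvd_prod_of_mem _ (Finset.mem_erase.mpr ⟨hjk, Finset.mem_univ j⟩)
  rw [hdiv0, Finset.gcd_congr rfl (fun i _ => hdivi i)]
  constructor
  · intro hG
    constructor
    · intro i j hij
      -- gcd (m i) (m j) divides P k for every k
      have hg : ∀ k, Nat.gcd (m i) (m j) ∣ P k := by
        intro k
        by_cases hik : i = k
        · exact dvd_trans (Nat.gcd_dvd_right _ _) (hmdvdP j k (hik ▸ hij.symm))
        · exact dvd_trans (Nat.gcd_dvd_left _ _) (hmdvdP i k hik)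
      have : Nat.gcd (m i) (m j) ∣ 1 := by
        rw [← hG]
        exact Nat.dvd_gcd (hg 0)
          (Finset.dvd_gcd fun t _ => dvd_trans (hg t.succ) (dvd_mul_left _ _))
      exact Nat.eq_one_of_dvd_one this
    · intro i
      have hg0 : Nat.gcd (a i) (m i.succ) ∣ P 0 :=
        dvd_trans (Nat.gcd_dvd_right _ _) (hmdvdP i.succ 0 (Fin.succ_ne_zero i))
      have hgt : ∀ t : Fin d, Nat.gcd (a i) (m i.succ) ∣ a t * P t.succ := by
        intro t
        by_cases hti : t = i
        · subst hti
          exact dvd_trans (Nat.gcd_dvd_left _ _) (dvd_mul_right _ _)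
        · refine dvd_trans ?_ (dvd_mul_left _ _)
          exact dvd_trans (Nat.gcd_dvd_right _ _)
            (hmdvdP i.succ t.succ (fun h => hti (Fin.succ_injective _ h).symm))
      have : Nat.gcd (a i) (m i.succ) ∣ 1 := by
        rw [← hG]
        exact Nat.dvd_gcd hg0 (Finset.dvd_gcd fun t _ => hgt t)
      exact Nat.eq_one_of_dvd_one this
  · rintro ⟨hcop, hacop⟩
    by_contra hG
    obtain ⟨p, hp, hpdvd⟩ := Nat.exists_prime_and_dvd hG
    have hp0 : p ∣ P 0 := dvd_trans hpdvd (Nat.gcd_dvd_left _ _)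
    have hpt : ∀ t : Fin d, p ∣ a t * P t.succ := fun t =>
      dvd_trans (dvd_trans hpdvd (Nat.gcd_dvd_right _ _)) (Finset.gcd_dvd (Finset.mem_univ t))
    -- from p ∣ P 0, find j ≠ 0 with p ∣ m j
    obtain ⟨j, hjmem, hpj⟩ := (hp.prime.dvd_finset_prod_iff m).mp hp0
    have hj0 : j ≠ 0 := (Finset.mem_erase.mp hjmem).1
    obtain ⟨i, rfl⟩ := Fin.eq_succ_of_ne_zero hj0
    rcases (hp.dvd_mul).mp (hpt i) with h | h
    · -- p ∣ a i, contradicting coprimality with m i.succ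
      have : p ∣ 1 := (hacop i) ▸ Nat.dvd_gcd h hpj
      exact hp.one_lt.ne' (Nat.eq_one_of_dvd_one this)
    · obtain ⟨k, hkmem, hpk⟩ := (hp.prime.dvd_finset_prod_iff m).mp h
      have hk : k ≠ i.succ := (Finset.mem_erase.mp hkmem).1
      have : p ∣ 1 := (hcop k i.succ hk) ▸ Nat.dvd_gcd hpk hpj
      exact hp.one_lt.ne' (Nat.eq_one_of_dvd_one this)
end

section
/- Let m₀,…,m_d and a₁,…,a_d be positive integers with the m_i pairwise coprime and gcd(a_i, m_i) = 1 for all i ≥ 1, and M = m₀⋯m_d. Let β : ℤ^(d+1) → ℤ^d be given by β(e₀) = -m₀(a₁,…,a_d), β(e_j) = m_j ε_j. Then ker β is generated by the vector (M/m₀, M·a₁/m₁, …, M·a_d/m_d). -/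
open Matrix

/-- If the labels `m_i` are pairwise coprime and `gcd(a_i, m_i) = 1`, with `M = ∏ m_i`,
then the kernel of `β` is generated by the vector `(M/m₀, M·a₁/m₁, …, M·a_d/m_d)`. -/
theorem stmt_14 (d : ℕ) (m : Fin (d + 1) → ℕ) (a : Fin d → ℕ)
    (hm : ∀ i, 0 < m i) (ha : ∀ i, 0 < a i)
    (hprim : Finset.univ.gcd a = 1)
    (hcop : ∀ i j, i ≠ j → Nat.Coprime (m i) (m j))
    (hcop' : ∀ i : Fin d, Nat.Coprime (a i) (m i.succ))
    (M : ℕ) (hM : M = ∏ i, m i) :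
    LinearMap.ker (Matrix.toLin' (shearedMatrix d m a))
      = Submodule.span ℤ {fun j : Fin (d + 1) =>
          (Fin.cases (motive := fun _ => ℤ) ((M / m 0 : ℕ) : ℤ)
            (fun i => ((M * a i / m i.succ : ℕ) : ℤ)) j)} := by
  have hm0 : m 0 ∣ M := hM ▸ Finset.dvd_prod_of_mem m (Finset.mem_univ 0)
  have hms : ∀ i : Fin d, m i.succ ∣ M := fun i =>
    hM ▸ Finset.dvd_prod_of_mem m (Finset.mem_univ i.succ)
  have hprod : (M / m 0) = ∏ i : Fin d, m i.succ := by
    rw [hM, Fin.prod_univ_succ, Nat.mul_div_cancel_left _ (hm 0)]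
  set v : Fin (d + 1) → ℤ := fun j : Fin (d + 1) =>
      (Fin.cases (motive := fun _ => ℤ) ((M / m 0 : ℕ) : ℤ)
        (fun i => ((M * a i / m i.succ : ℕ) : ℤ)) j) with hv
  have hv0 : v 0 = ((M / m 0 : ℕ) : ℤ) := rfl
  have hvs : ∀ i : Fin d, v i.succ = ((M * a i / m i.succ : ℕ) : ℤ) := fun i => by
    simp [hv]
  -- membership criterion for the kernel
  have hcalc : ∀ x : Fin (d + 1) → ℤ, ∀ i : Fin d,
      (shearedMatrix d m a).mulVec x i
        = -((m 0 : ℤ) * a i * x 0) + (m i.succ : ℤ) * x i.succ := by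
    intro x i
    simp only [Matrix.mulVec, dotProduct, shearedMatrix]
    rw [Fin.sum_univ_succ]
    simp [Fin.succ_ne_zero, Fin.succ_inj, mul_assoc]
  have hmem : ∀ x : Fin (d + 1) → ℤ,
      x ∈ LinearMap.ker (Matrix.toLin' (shearedMatrix d m a)) ↔
      ∀ i : Fin d, (m i.succ : ℤ) * x i.succ = (m 0 : ℤ) * (a i : ℤ) * x 0 := by
    intro x
    rw [LinearMap.mem_ker, Matrix.toLin'_apply, funext_iff]
    constructor
    · intro h i
      have := h i
      rw [hcalc, Pi.zero_apply] at this
      linarith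
    · intro h i
      rw [hcalc, Pi.zero_apply, h i]
      ring
  -- v is in the kernel
  have hvk : ∀ i : Fin d, (m i.succ : ℤ) * v i.succ = (m 0 : ℤ) * (a i : ℤ) * v 0 := by
    intro i
    have h1 : m i.succ * (M * a i / m i.succ) = M * a i :=
      Nat.mul_div_cancel' ((hms i).mul_right _)
    have h2 : m 0 * (M / m 0) = M := Nat.mul_div_cancel' hm0
    rw [hv0, hvs]
    have key : m i.succ * (M * a i / m i.succ) = m 0 * a i * (M / m 0) := by
      rw [h1, mul_comm (m 0) (a i), mul_assoc, h2, mul_comm]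
    exact_mod_cast key
  apply le_antisymm
  · -- ker ≤ span
    intro x hx
    rw [hmem] at hx
    have hdvdx : ∀ i : Fin d, (m i.succ : ℤ) ∣ x 0 := by
      intro i
      have hc1 : IsCoprime ((m i.succ : ℤ)) ((m 0 : ℤ) * (a i : ℤ)) :=
        (Nat.isCoprime_iff_coprime.mpr (hcop i.succ 0 (Fin.succ_ne_zero i))).mul_right
          (Nat.isCoprime_iff_coprime.mpr (hcop' i).symm)
      exact hc1.dvd_of_dvd_mul_left ⟨x i.succ, (hx i).symm⟩
    have hpd : ((M / m 0 : ℕ) : ℤ) ∣ x 0 := by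
      have : (∏ i : Fin d, (m i.succ : ℤ)) ∣ x 0 :=
        Fintype.prod_dvd_of_coprime
          (fun i j hij => Nat.isCoprime_iff_coprime.mpr
            (hcop i.succ j.succ (fun h => hij (Fin.succ_injective _ h))))
          hdvdx
      rwa [hprod, Nat.cast_prod]
    obtain ⟨c, hc⟩ := hpd
    have hxv : x = c • v := by
      funext j
      induction j using Fin.cases with
      | zero => simpa [hv0, mul_comm] using hc
      | succ i =>
        have hne : ((m i.succ : ℕ) : ℤ) ≠ 0 := by
          exact_mod_cast (hm i.succ).ne'
        apply mul_left_cancel₀ hne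
        calc ((m i.succ : ℕ) : ℤ) * x i.succ = (m 0 : ℤ) * a i * x 0 := hx i
          _ = (m 0 : ℤ) * a i * v 0 * c := by rw [hc, hv0]; ring
          _ = ((m i.succ : ℕ) : ℤ) * v i.succ * c := by rw [hvk i]
          _ = ((m i.succ : ℕ) : ℤ) * (c • v) i.succ := by
              rw [Pi.smul_apply, smul_eq_mul]; ring
    exact Submodule.mem_span_singleton.mpr ⟨c, hxv.symm⟩
  · rw [Submodule.span_le, Set.singleton_subset_iff]
    exact (hmem v).mpr hvk
end

section
/- Let β : ℤ^(d+1) → ℤ^d be the map of a labelled sheared simplex: β(e₀) = -m₀·a, β(e_j) = m_j ε_j, with a = (a₁,…,a_d) a primitive vector of positive integers and m_i positive integers. Let I ⊆ {0,1,…,d} with 0 ∈ I and I ≠ {0,…,d}, let N_I ⊆ ℤ^d be the subgroup generated by {β(e_i) : i ∈ I}, and set d_I = gcd(a_j : j ∉ I) (with a₀ := 1). Then the torsion subgroup of ℤ^d/N_I fits in a short exact sequence 0 → ⨁_{i∈I} ℤ/m_iℤ → Tor(ℤ^d/N_I) → ℤ/d_Iℤ → 0. -/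
open Matrix

/-- `a₀ := 1`, `a_j` for `j ≥ 1`. -/
def aExt (d : ℕ) (a : Fin d → ℕ) : Fin (d + 1) → ℕ :=
  fun j => Fin.cases 1 a j

set_option maxHeartbeats 1000000

private theorem gcd_cast_aux {ι : Type*} [DecidableEq ι] (s : Finset ι) (v : ι → ℕ) :
    Finset.gcd s (fun j => (v j : ℤ)) = ((Finset.gcd s v : ℕ) : ℤ) := by
  induction s using Finset.induction_on with
  | empty => simp
  | insert _ _ hb ih =>
    rw [Finset.gcd_insert, Finset.gcd_insert, ih, ← Int.coe_gcd, Int.gcd_natCast_natCast]; rfl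

private theorem bezout_aux {ι : Type*} [DecidableEq ι] (s : Finset ι) (v : ι → ℤ) :
    ∃ c : ι → ℤ, ∑ j ∈ s, c j * v j = Finset.gcd s v := by
  induction s using Finset.induction_on with
  | empty => exact ⟨0, by simp⟩
  | @insert b s hb ih =>
    obtain ⟨c, hc⟩ := ih
    refine ⟨fun j => if j = b then (v b).gcdA (s.gcd v) else (v b).gcdB (s.gcd v) * c j, ?_⟩
    rw [Finset.sum_insert hb, Finset.gcd_insert, ← Int.coe_gcd, Int.gcd_eq_gcd_ab]
    have : ∑ j ∈ s, (if j = b then (v b).gcdA (s.gcd v) else (v b).gcdB (s.gcd v) * c j) * v j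
        = (v b).gcdB (s.gcd v) * ∑ j ∈ s, c j * v j := by
      rw [Finset.mul_sum]
      refine Finset.sum_congr rfl fun j hj => ?_
      rw [if_neg (by rintro rfl; exact hb hj), mul_assoc]
    rw [this, hc]; simp; ring

/-- For a labelled sheared simplex with primitive vector `a` and labels `m_i`, for
`I ∋ 0` a proper subset of `{0,…,d}`, with `N_I = span{β(e_i) : i ∈ I}` and
`d_I = gcd(a_j : j ∉ I)` (where `a₀ = 1`), the torsion subgroup of `ℤ^d/N_I` is an
extension `0 → ⨁_{i∈I} ℤ/m_iℤ → Tor(ℤ^d/N_I) → ℤ/d_Iℤ → 0`. -/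
theorem stmt_15 (d : ℕ) (m : Fin (d + 1) → ℕ) (a : Fin d → ℕ)
    (hm : ∀ i, 0 < m i) (ha : ∀ i, 0 < a i)
    (hprim : Finset.univ.gcd a = 1)
    (I : Finset (Fin (d + 1))) (h0 : 0 ∈ I) (hI : I ≠ Finset.univ) :
    ∃ (f : (∀ i : {x // x ∈ I}, ZMod (m i)) →+
        Submodule.torsion ℤ ((Fin d → ℤ) ⧸ Submodule.span ℤ
          ((fun i : Fin (d + 1) => Matrix.toLin' (shearedMatrix d m a) (Pi.single i 1)) '' I)))
      (g : Submodule.torsion ℤ ((Fin d → ℤ) ⧸ Submodule.span ℤ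
          ((fun i : Fin (d + 1) => Matrix.toLin' (shearedMatrix d m a) (Pi.single i 1)) '' I))
        →+ ZMod (Iᶜ.gcd (aExt d a))),
      Function.Injective f ∧ Function.Surjective g ∧ f.range = g.ker := by
  classical
  haveI : ∀ i : Fin (d+1), NeZero (m i) := fun i => ⟨(hm i).ne'⟩
  set A : Fin d → ℤ := fun t => (a t : ℤ) with hAdef
  have hApos : ∀ t, 0 < A t := fun t => Int.natCast_pos.mpr (ha t)
  set col : Fin (d + 1) → (Fin d → ℤ) :=
    fun i => Matrix.toLin' (shearedMatrix d m a) (Pi.single i 1) with hcoldef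
  set w : Fin (d + 1) → (Fin d → ℤ) :=
    fun i => Fin.cases (fun r => -(A r)) (fun t => Pi.single t 1) i with hwdef
  have hw0 : ∀ r, w 0 r = -(A r) := fun r => by simp [hwdef]
  have hwsucc : ∀ t, w t.succ = Pi.single t (1 : ℤ) := fun t => by simp [hwdef]
  have hcolw : ∀ i, col i = (m i : ℤ) • w i := by
    intro i
    funext r
    rw [hcoldef]
    simp only [Matrix.toLin'_apply, Matrix.mulVec_single, mul_one, MulOpposite.op_one, one_smul,
      Matrix.col_apply]
    induction i using Fin.cases with
    | zero => simp [shearedMatrix, hw0, hAdef]; try ring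
    | succ t =>
      rw [hwsucc]
      simp only [shearedMatrix, Pi.smul_apply, smul_eq_mul]
      rw [if_neg (Fin.succ_ne_zero t)]
      by_cases h : r = t
      · subst h; simp
      · rw [if_neg (by simpa [Fin.succ_inj] using Ne.symm h), Pi.single_apply, if_neg h,
          mul_zero]
  set N : Submodule ℤ (Fin d → ℤ) := Submodule.span ℤ (col '' ↑I) with hNdef
  -- generators are in N
  have hcolN : ∀ i ∈ I, col i ∈ N := fun i hi =>
    Submodule.subset_span ⟨i, by simpa using hi, rfl⟩
  have hNw : ∀ i ∈ I, ∀ z : ℤ, (z * (m i : ℤ)) • w i ∈ N := by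
    intro i hi z
    have : (z * (m i : ℤ)) • w i = z • col i := by rw [hcolw, ← smul_smul]
    rw [this]
    exact N.smul_mem z (hcolN i hi)
  -- the index set T ⊆ Fin d of coordinates outside I
  set T : Finset (Fin d) := Finset.univ.filter (fun t => t.succ ∉ I) with hTdef
  have hmemT : ∀ t, t ∈ T ↔ t.succ ∉ I := fun t => by simp [hTdef]
  have hIc : Iᶜ = T.image Fin.succ := by
    ext j
    induction j using Fin.cases with
    | zero => simp [h0, Fin.succ_ne_zero]
    | succ t => simp [hmemT, Fin.succ_inj]
  set gN : ℕ := Iᶜ.gcd (aExt d a) with hgNdef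
  have hgZ : ((gN : ℕ) : ℤ) = T.gcd A := by
    rw [hgNdef, hIc, ← gcd_cast_aux, Finset.gcd_image]
    have h2 : ((fun j => ((aExt d a j : ℕ) : ℤ)) ∘ Fin.succ) = fun t : Fin d => A t := by
      funext t; simp [aExt, hAdef]
    rw [h2]
  have hTne : T.Nonempty := by
    by_contra h
    apply hI
    rw [Finset.not_nonempty_iff_eq_empty] at h
    have : Iᶜ = ∅ := by rw [hIc, h]; simp
    rwa [Finset.compl_eq_empty_iff] at this
  have hgdvd : ∀ t ∈ T, ((gN : ℕ) : ℤ) ∣ A t := by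
    intro t ht
    rw [hgZ]
    exact Finset.gcd_dvd ht
  have hgNpos : 0 < gN := by
    obtain ⟨t, ht⟩ := hTne
    rcases Nat.eq_zero_or_pos gN with h | h
    · exfalso
      have h2 := hgdvd t ht
      rw [h] at h2
      norm_num at h2
      exact (hApos t).ne' h2
    · exact h
  haveI : NeZero gN := ⟨hgNpos.ne'⟩
  have hgZne : ((gN : ℕ) : ℤ) ≠ 0 := Int.natCast_ne_zero.mpr hgNpos.ne'
  -- Bezout coefficients
  obtain ⟨c, hc⟩ := bezout_aux T A
  rw [← hgZ] at hc
  -- the functional ψ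
  set ψ : (Fin d → ℤ) →ₗ[ℤ] ZMod gN :=
    { toFun := fun x => ((∑ t ∈ T, c t * x t : ℤ) : ZMod gN)
      map_add' := by
        intro x y
        simp only [Pi.add_apply, mul_add, Finset.sum_add_distrib, Int.cast_add]
      map_smul' := by
        intro z x
        simp only [Pi.smul_apply, smul_eq_mul, RingHom.id_apply, zsmul_eq_mul]
        rw [← Int.cast_mul, Finset.mul_sum]
        congr 1
        exact Finset.sum_congr rfl fun t ht => by ring } with hψdef
  have hψapp : ∀ x, ψ x = ((∑ t ∈ T, c t * x t : ℤ) : ZMod gN) := fun x => rfl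
  -- ψ kills the classes of all w i, i ∈ I
  have hψw : ∀ i ∈ I, ψ (w i) = 0 := by
    intro i hi
    induction i using Fin.cases with
    | zero =>
      rw [hψapp]
      have : ∑ t ∈ T, c t * w 0 t = -((gN : ℕ) : ℤ) := by
        rw [← hc, ← Finset.sum_neg_distrib]
        exact Finset.sum_congr rfl fun t ht => by rw [hw0]; ring
      rw [this]
      push_cast
      simp
    | succ s =>
      rw [hψapp]
      have : ∀ t ∈ T, c t * w s.succ t = 0 := by
        intro t ht
        rw [hwsucc, Pi.single_apply, if_neg, mul_zero]
        intro h; subst h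
        exact (hmemT t).1 ht hi
      rw [Finset.sum_congr rfl this]
      simp
  have hψN : N ≤ LinearMap.ker ψ := by
    rw [hNdef, Submodule.span_le]
    rintro x ⟨i, hi, rfl⟩
    have hi' : i ∈ I := by simpa using hi
    simp only [SetLike.mem_coe, LinearMap.mem_ker]
    rw [hcolw, _root_.map_smul, hψw i hi', smul_zero]
  set G : ((Fin d → ℤ) ⧸ N) →ₗ[ℤ] ZMod gN := N.liftQ ψ hψN with hGdef
  -- torsion elements from the w i
  have hτmem : ∀ i ∈ I, (Submodule.Quotient.mk (w i) : (Fin d → ℤ) ⧸ N) ∈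
      Submodule.torsion ℤ ((Fin d → ℤ) ⧸ N) := by
    intro i hi
    rw [Submodule.mem_torsion_iff]
    refine ⟨⟨(m i : ℤ), mem_nonZeroDivisors_iff_ne_zero.2 (by exact_mod_cast (hm i).ne')⟩, ?_⟩
    show ((m i : ℤ)) • (Submodule.Quotient.mk (w i) : (Fin d → ℤ) ⧸ N) = 0
    rw [← Submodule.Quotient.mk_smul, Submodule.Quotient.mk_eq_zero]
    simpa using hNw i hi 1
  set τ : {x // x ∈ I} → Submodule.torsion ℤ ((Fin d → ℤ) ⧸ N) :=
    fun i => ⟨Submodule.Quotient.mk (w i), hτmem i i.2⟩ with hτdef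
  have hτzero : ∀ i : {x // x ∈ I}, ((m i : ℕ) : ℤ) • τ i = 0 := by
    intro i
    apply Subtype.ext
    show ((m i : ℤ)) • (Submodule.Quotient.mk (w i) : (Fin d → ℤ) ⧸ N) = 0
    rw [← Submodule.Quotient.mk_smul, Submodule.Quotient.mk_eq_zero]
    simpa using hNw i i.2 1
  set F : (∀ i : {x // x ∈ I}, ZMod (m i)) →+ Submodule.torsion ℤ ((Fin d → ℤ) ⧸ N) :=
    ∑ i : {x // x ∈ I},
      (ZMod.lift (m i) ⟨zmultiplesHom _ (τ i), by rw [zmultiplesHom_apply]; exact hτzero i⟩).comp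
        (Pi.evalAddMonoidHom (fun i : {x // x ∈ I} => ZMod (m i)) i) with hFdef
  -- value of F on integer-cast coefficient vectors
  have hFval : ∀ k : Fin (d + 1) → ℤ,
      ((F (fun i : {x // x ∈ I} => ((k i : ℤ) : ZMod (m i))) :
        Submodule.torsion ℤ ((Fin d → ℤ) ⧸ N)) : (Fin d → ℤ) ⧸ N)
        = Submodule.Quotient.mk (∑ i ∈ I, k i • w i) := by
    intro k
    rw [hFdef, AddMonoidHom.finset_sum_apply]
    have : ∀ i : {x // x ∈ I},
        ((ZMod.lift (m i) ⟨zmultiplesHom _ (τ i), by rw [zmultiplesHom_apply]; exact hτzero i⟩).comp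
          (Pi.evalAddMonoidHom (fun i : {x // x ∈ I} => ZMod (m i)) i))
          (fun i : {x // x ∈ I} => ((k i : ℤ) : ZMod (m i)))
        = k i • τ i := by
      intro i
      simp only [AddMonoidHom.comp_apply, Pi.evalAddMonoidHom_apply]
      rw [ZMod.lift_coe]
      simp [zmultiplesHom_apply]
    rw [Finset.sum_congr rfl (fun i _ => this i)]
    push_cast [AddSubmonoidClass.coe_finset_sum]
    rw [Finset.sum_coe_sort I (fun i => k i • (Submodule.Quotient.mk (w i) : (Fin d → ℤ) ⧸ N))]
    rw [← Submodule.mkQ_apply, map_sum]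
    exact Finset.sum_congr rfl fun i _ => by rw [_root_.map_smul, Submodule.mkQ_apply]
  -- every coefficient vector is of cast form
  have hcast : ∀ (cc : ∀ i : {x // x ∈ I}, ZMod (m i)),
      cc = fun i : {x // x ∈ I} => (((cc i).val : ℤ) : ZMod (m i)) := by
    intro cc
    funext i
    have h1 : (((cc i).val : ℕ) : ZMod (m i)) = cc i := ZMod.natCast_rightInverse (cc i)
    rw [Int.cast_natCast]
    exact h1.symm
  -- coordinates of combinations of the w i
  have hcoord : ∀ (q : Fin (d + 1) → ℤ) (r : Fin d),
      (∑ i ∈ I, q i • w i) r = -(q 0) * A r + (if r.succ ∈ I then q r.succ else 0) := by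
    intro q r
    rw [Finset.sum_apply]
    rw [← Finset.add_sum_erase _ _ h0]
    have h1 : (q 0 • w 0) r = -(q 0) * A r := by
      rw [Pi.smul_apply, smul_eq_mul, hw0]; ring
    have h2 : ∀ i ∈ I.erase 0, (q i • w i) r = if i = r.succ then q i else 0 := by
      intro i hi
      have hine : i ≠ 0 := Finset.ne_of_mem_erase hi
      induction i using Fin.cases with
      | zero => exact absurd rfl hine
      | succ t =>
        rw [Pi.smul_apply, smul_eq_mul, hwsucc, Pi.single_apply]
        by_cases h : t = r
        · subst h; simp
        · rw [if_neg (fun hh => h (Fin.succ_inj.1 hh)), if_neg (Ne.symm h), mul_zero]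
    rw [Finset.sum_congr rfl h2, Finset.sum_ite_eq' (I.erase 0) r.succ q]
    have : r.succ ∈ I.erase 0 ↔ r.succ ∈ I := by
      simp [Finset.mem_erase, Fin.succ_ne_zero]
    rw [h1, if_congr this rfl rfl]
  -- membership in N gives coefficients
  have hmemN : ∀ v : Fin d → ℤ, v ∈ N →
      ∃ l : Fin (d + 1) → ℤ, v = ∑ i ∈ I, (l i * (m i : ℤ)) • w i := by
    intro v hv
    rw [hNdef, Finsupp.mem_span_image_iff_linearCombination] at hv
    obtain ⟨l, hl, hlv⟩ := hv
    rw [Finsupp.mem_supported] at hl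
    refine ⟨l, ?_⟩
    rw [← hlv, Finsupp.linearCombination_apply]
    rw [Finsupp.sum_of_support_subset l (by simpa using hl) (fun i a => a • col i)
      (fun i _ => zero_smul ℤ _)]
    exact Finset.sum_congr rfl fun i hi => by rw [hcolw, smul_smul, mul_comm]
  -- representation of coefficient vectors by integer vectors
  have hkrep : ∀ cc : (∀ i : {x // x ∈ I}, ZMod (m i)), ∃ k : Fin (d + 1) → ℤ,
      cc = (fun i : {x // x ∈ I} => ((k i : ℤ) : ZMod (m i)))
        ∧ ∀ (i : Fin (d + 1)) (hi : i ∈ I), k i = (((cc ⟨i, hi⟩).val : ℕ) : ℤ) := by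
    intro cc
    refine ⟨fun i => if h : i ∈ I then (((cc ⟨i, h⟩).val : ℕ) : ℤ) else 0, ?_,
      fun i hi => dif_pos hi⟩
    funext i
    obtain ⟨i, hi⟩ := i
    show cc ⟨i, hi⟩ = (((if h : i ∈ I then (((cc ⟨i, h⟩).val : ℕ) : ℤ) else 0) : ℤ) : ZMod (m i))
    rw [dif_pos hi, Int.cast_natCast]
    exact (ZMod.natCast_rightInverse _).symm
  refine ⟨F, G.toAddMonoidHom.comp (Submodule.torsion ℤ ((Fin d → ℤ) ⧸ N)).subtype.toAddMonoidHom,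
    ?_, ?_, ?_⟩
  · -- injectivity of F
    rw [injective_iff_map_eq_zero]
    intro cc hcc
    obtain ⟨k, hkc, hkv⟩ := hkrep cc
    have hv : (Submodule.Quotient.mk (∑ i ∈ I, k i • w i) : (Fin d → ℤ) ⧸ N) = 0 := by
      rw [← hFval k, ← hkc, hcc]
      rfl
    rw [Submodule.Quotient.mk_eq_zero] at hv
    obtain ⟨l, hl⟩ := hmemN _ hv
    have hEq : ∀ r : Fin d, -(k 0) * A r + (if r.succ ∈ I then k r.succ else 0)
        = -(l 0 * (m 0 : ℤ)) * A r
          + (if r.succ ∈ I then l r.succ * (m r.succ : ℤ) else 0) := by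
      intro r
      have h := congrFun hl r
      rw [hcoord k r] at h
      rw [h]
      exact hcoord (fun i => l i * (m i : ℤ)) r
    obtain ⟨r0, hr0⟩ := hTne
    have hr0' : r0.succ ∉ I := (hmemT r0).1 hr0
    have h00 : k 0 = l 0 * (m 0 : ℤ) := by
      have h := hEq r0
      rw [if_neg hr0', if_neg hr0'] at h
      have h2 : k 0 * A r0 = (l 0 * (m 0 : ℤ)) * A r0 := by linarith
      exact mul_right_cancel₀ (hApos r0).ne' h2
    have hsucc : ∀ r : Fin d, r.succ ∈ I → k r.succ = l r.succ * (m r.succ : ℤ) := by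
      intro r hr
      have h := hEq r
      rw [if_pos hr, if_pos hr, h00] at h
      linarith
    have hdvdall : ∀ (i : Fin (d + 1)), i ∈ I → ((m i : ℕ) : ℤ) ∣ k i := by
      intro i hi
      rcases Fin.eq_zero_or_eq_succ i with rfl | ⟨t, rfl⟩
      · exact ⟨l 0, by rw [h00]; ring⟩
      · exact ⟨l t.succ, by rw [hsucc t hi]; ring⟩
    funext i
    obtain ⟨i, hi⟩ := i
    show cc ⟨i, hi⟩ = 0
    have hdvd := hdvdall i hi
    rw [hkv i hi] at hdvd
    have hdvd' : m i ∣ (cc ⟨i, hi⟩).val := Int.natCast_dvd_natCast.mp hdvd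
    have hvz : (cc ⟨i, hi⟩).val = 0 := Nat.eq_zero_of_dvd_of_lt hdvd' (ZMod.val_lt _)
    calc cc ⟨i, hi⟩ = (((cc ⟨i, hi⟩).val : ℕ) : ZMod (m i)) :=
          (ZMod.natCast_rightInverse _).symm
      _ = 0 := by rw [hvz]; simp
  · -- surjectivity of G ∘ inclusion
    intro y
    set u : Fin d → ℤ := fun t => if t.succ ∈ I then 0 else A t / ((gN : ℕ) : ℤ) with hudef
    have hgu : ∀ t ∈ T, ((gN : ℕ) : ℤ) * u t = A t := by
      intro t ht
      rw [hudef]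
      simp only [if_neg ((hmemT t).1 ht)]
      exact Int.mul_ediv_cancel' (hgdvd t ht)
    set P : ℤ := ∏ i ∈ I, (m i : ℤ) with hPdef
    have hPne : P ≠ 0 := by
      rw [hPdef]
      exact Finset.prod_ne_zero_iff.2 fun i _ => Int.natCast_ne_zero.mpr (hm i).ne'
    have h0P : (∏ i ∈ I.erase 0, (m i : ℤ)) * (m 0 : ℤ) = P := by
      rw [hPdef, mul_comm]
      exact Finset.mul_prod_erase I (fun i => ((m i : ℕ) : ℤ)) h0
    have huN : (((gN : ℕ) : ℤ) * P) • u ∈ N := by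
      have hdecomp : (((gN : ℕ) : ℤ) * P) • u
          = ((-(∏ i ∈ I.erase 0, (m i : ℤ))) * (m 0 : ℤ)) • w 0
            + ∑ t ∈ Finset.univ.filter (fun t : Fin d => t.succ ∈ I),
                ((-(A t) * (∏ i ∈ I.erase t.succ, (m i : ℤ))) * (m t.succ : ℤ)) • w t.succ := by
        funext r
        simp only [Pi.add_apply, Pi.smul_apply, smul_eq_mul, Finset.sum_apply]
        rw [hw0]
        have hterm : ∀ t ∈ Finset.univ.filter (fun t : Fin d => t.succ ∈ I),
            ((-(A t) * (∏ i ∈ I.erase t.succ, (m i : ℤ))) * (m t.succ : ℤ)) * w t.succ r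
            = if t = r then -(A r) * P else 0 := by
          intro t ht
          have htI : t.succ ∈ I := by simpa using ht
          have htP : (∏ i ∈ I.erase t.succ, (m i : ℤ)) * (m t.succ : ℤ) = P := by
            rw [hPdef, mul_comm]
            exact Finset.mul_prod_erase I (fun i => ((m i : ℕ) : ℤ)) htI
          rw [hwsucc, Pi.single_apply]
          by_cases h : t = r
          · subst h
            rw [if_pos rfl, if_pos rfl, mul_one, mul_assoc, htP]
          · rw [if_neg (Ne.symm h), if_neg h, mul_zero]
        rw [Finset.sum_congr rfl hterm, Finset.sum_ite_eq' (Finset.univ.filter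
          (fun t : Fin d => t.succ ∈ I)) r (fun _ => -(A r) * P)]
        by_cases hr : r.succ ∈ I
        · rw [if_pos (by simpa using hr)]
          rw [hudef]
          simp only [if_pos hr, mul_zero]
          rw [← h0P]
          ring
        · rw [if_neg (by simpa using hr)]
          have h2 : ((gN : ℕ) : ℤ) * u r = A r := hgu r ((hmemT r).2 hr)
          calc ((gN : ℕ) : ℤ) * P * u r = P * (((gN : ℕ) : ℤ) * u r) := by ring
            _ = P * A r := by rw [h2]
            _ = -(∏ i ∈ I.erase 0, (m i : ℤ)) * (m 0 : ℤ) * -A r + 0 := by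
                rw [← h0P]; ring
      rw [hdecomp]
      refine N.add_mem (hNw 0 h0 _) (N.sum_mem fun t ht => hNw t.succ (by simpa using ht) _)
    have hmemu : (Submodule.Quotient.mk u : (Fin d → ℤ) ⧸ N) ∈
        Submodule.torsion ℤ ((Fin d → ℤ) ⧸ N) := by
      rw [Submodule.mem_torsion_iff]
      refine ⟨⟨((gN : ℕ) : ℤ) * P, mem_nonZeroDivisors_iff_ne_zero.2
        (mul_ne_zero hgZne hPne)⟩, ?_⟩
      show (((gN : ℕ) : ℤ) * P) • (Submodule.Quotient.mk u : (Fin d → ℤ) ⧸ N) = 0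
      rw [← Submodule.Quotient.mk_smul, Submodule.Quotient.mk_eq_zero]
      exact huN
    have hψu : ψ u = 1 := by
      rw [hψapp]
      have hsum : ((gN : ℕ) : ℤ) * (∑ t ∈ T, c t * u t) = ((gN : ℕ) : ℤ) * 1 := by
        rw [Finset.mul_sum, mul_one]
        have hterm2 : ∀ t ∈ T, ((gN : ℕ) : ℤ) * (c t * u t) = c t * A t := by
          intro t ht
          calc ((gN : ℕ) : ℤ) * (c t * u t) = c t * (((gN : ℕ) : ℤ) * u t) := by ring
            _ = c t * A t := by rw [hgu t ht]
        rw [Finset.sum_congr rfl hterm2, hc]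
      have h1 : (∑ t ∈ T, c t * u t) = 1 := mul_left_cancel₀ hgZne hsum
      rw [h1]
      simp
    refine ⟨(y.val : ℤ) • ⟨Submodule.Quotient.mk u, hmemu⟩, ?_⟩
    rw [map_zsmul]
    have hg1 : (G.toAddMonoidHom.comp
        (Submodule.torsion ℤ ((Fin d → ℤ) ⧸ N)).subtype.toAddMonoidHom)
        ⟨Submodule.Quotient.mk u, hmemu⟩ = 1 := by
      show G (Submodule.Quotient.mk u) = 1
      rw [hGdef, Submodule.liftQ_apply]
      exact hψu
    rw [hg1, zsmul_eq_mul, mul_one, Int.cast_natCast]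
    exact ZMod.natCast_rightInverse y
  · -- exactness
    ext x
    rw [AddMonoidHom.mem_range, AddMonoidHom.mem_ker]
    constructor
    · rintro ⟨cc, rfl⟩
      obtain ⟨k, hkc, -⟩ := hkrep cc
      have hval : ((F cc : Submodule.torsion ℤ ((Fin d → ℤ) ⧸ N)) : (Fin d → ℤ) ⧸ N)
          = Submodule.Quotient.mk (∑ i ∈ I, k i • w i) := by
        rw [hkc]
        exact hFval k
      show G ((F cc : Submodule.torsion ℤ ((Fin d → ℤ) ⧸ N)) : (Fin d → ℤ) ⧸ N) = 0
      rw [hval, hGdef, Submodule.liftQ_apply, map_sum]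
      refine Finset.sum_eq_zero fun i hi => ?_
      rw [_root_.map_smul, hψw i hi, smul_zero]
    · intro hx
      obtain ⟨xq, hxtor⟩ := x
      obtain ⟨xx, rfl⟩ := Submodule.Quotient.mk_surjective N xq
      have hψx : ψ xx = 0 := by
        have h1 : G (Submodule.Quotient.mk xx) = 0 := hx
        rwa [hGdef, Submodule.liftQ_apply] at h1
      obtain ⟨n, hn⟩ := (Submodule.mem_torsion_iff _).1 hxtor
      have hnne : ((n : ℤ)) ≠ 0 := mem_nonZeroDivisors_iff_ne_zero.1 n.2
      have hnx : ((n : ℤ)) • xx ∈ N := by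
        rw [← Submodule.Quotient.mk_eq_zero, Submodule.Quotient.mk_smul]
        exact hn
      obtain ⟨l, hl⟩ := hmemN _ hnx
      have hcr : ∀ r : Fin d, (n : ℤ) * xx r = -(l 0 * (m 0 : ℤ)) * A r
          + (if r.succ ∈ I then l r.succ * (m r.succ : ℤ) else 0) := by
        intro r
        have h := congrFun hl r
        simp only [Pi.smul_apply, smul_eq_mul] at h
        rw [h]
        exact hcoord (fun i => l i * (m i : ℤ)) r
      have hcrT : ∀ r ∈ T, (n : ℤ) * xx r = -(l 0 * (m 0 : ℤ)) * A r := by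
        intro r hr
        rw [hcr r, if_neg ((hmemT r).1 hr), add_zero]
      have hns : (n : ℤ) * (∑ t ∈ T, c t * xx t) = -(l 0 * (m 0 : ℤ)) * ((gN : ℕ) : ℤ) := by
        rw [Finset.mul_sum]
        have hterm2 : ∀ t ∈ T, (n : ℤ) * (c t * xx t)
            = -(l 0 * (m 0 : ℤ)) * (c t * A t) := by
          intro t ht
          calc (n : ℤ) * (c t * xx t) = c t * ((n : ℤ) * xx t) := by ring
            _ = c t * (-(l 0 * (m 0 : ℤ)) * A t) := by rw [hcrT t ht]
            _ = -(l 0 * (m 0 : ℤ)) * (c t * A t) := by ring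
        rw [Finset.sum_congr rfl hterm2, ← Finset.mul_sum, hc]
      have hdvd : ((gN : ℕ) : ℤ) ∣ (∑ t ∈ T, c t * xx t) := by
        have h1 : (((∑ t ∈ T, c t * xx t : ℤ)) : ZMod gN) = 0 := by
          rw [← hψapp]
          exact hψx
        exact (ZMod.intCast_zmod_eq_zero_iff_dvd _ gN).1 h1
      obtain ⟨s', hs'⟩ := hdvd
      have hxT : ∀ r ∈ T, xx r = s' * A r := by
        intro r hr
        have h1 : (n : ℤ) * (((gN : ℕ) : ℤ) * xx r)
            = (n : ℤ) * (((gN : ℕ) : ℤ) * (s' * A r)) := by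
          calc (n : ℤ) * (((gN : ℕ) : ℤ) * xx r)
              = ((gN : ℕ) : ℤ) * ((n : ℤ) * xx r) := by ring
            _ = ((gN : ℕ) : ℤ) * (-(l 0 * (m 0 : ℤ)) * A r) := by rw [hcrT r hr]
            _ = (-(l 0 * (m 0 : ℤ)) * ((gN : ℕ) : ℤ)) * A r := by ring
            _ = ((n : ℤ) * (∑ t ∈ T, c t * xx t)) * A r := by rw [hns]
            _ = (n : ℤ) * (((gN : ℕ) : ℤ) * (s' * A r)) := by rw [hs']; ring
        exact mul_left_cancel₀ hgZne (mul_left_cancel₀ hnne h1)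
      set k : Fin (d + 1) → ℤ :=
        fun i => Fin.cases (-s') (fun t => xx t - s' * A t) i with hkdef2
      have hk0 : k 0 = -s' := by simp [hkdef2]
      have hksucc : ∀ t, k t.succ = xx t - s' * A t := fun t => by simp [hkdef2]
      have hxsum : ∑ i ∈ I, k i • w i = xx := by
        funext r
        rw [hcoord k r, hk0]
        by_cases hr : r.succ ∈ I
        · rw [if_pos hr, hksucc]
          ring
        · rw [if_neg hr, hxT r ((hmemT r).2 hr)]
          ring
      refine ⟨fun i : {x // x ∈ I} => ((k i : ℤ) : ZMod (m i)), ?_⟩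
      apply Subtype.ext
      show ((F (fun i : {x // x ∈ I} => ((k i : ℤ) : ZMod (m i))) :
          Submodule.torsion ℤ ((Fin d → ℤ) ⧸ N)) : (Fin d → ℤ) ⧸ N)
        = Submodule.Quotient.mk xx
      rw [hFval k, hxsum]
end

section
/- Let a = (a₁,…,a_d) be a primitive positive integer vector and m₀,…,m_d positive labels with the m_i pairwise coprime and gcd(a_i, m_i) = 1 for i ≥ 1 (so the associated stack is a weighted projective stack). For I ⊆ {0,…,d} proper and nonempty with 0 ∈ I, let N_I = span{β(e_i) : i ∈ I} ⊆ ℤ^d where β(e₀) = -m₀a, β(e_j) = m_jε_j, and d_I = gcd(a_j : j ∉ I). Then Tor(ℤ^d/N_I) ≅ ℤ/( (∏_{i∈I} m_i)·d_I )ℤ, i.e. the torsion subgroup is cyclic of order d_I·∏_{i∈I} m_i. -/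
/-!
Write `S = {i | i + 1 ∈ I}` and `J` for its (nonempty) complement, so that `N_I` is spanned
by `v = β(e₀)` and the `m_{i+1} ε_i`, `i ∈ S`. On `J` factor `v = g b` with
`gcd (b_j : j ∈ J) = 1` (so `g = -m₀ d_I`), and let `w` be `b` on `J` and `0` on `S`.

If `k x ∈ N_I` with `k ≠ 0`, the `J`-coordinates read `k x_j = t g b_j`; hence `k ∣ t g` and
`x - μ w` is supported on `S`. Each `ε_i` with `i ∈ S` is a multiple of `w` modulo `N_I`, since
`m_{i+1}` is coprime to `v_i` and to the other labels. So the class of `w` generates the torsion,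
and the same coprimality shows that `k w ∈ N_I` iff `g ∏_{i ∈ S} m_{i+1} ∣ k`.
-/

open Matrix

open Submodule Finset Function

theorem Finset.dvd_of_forall_dvd_mul_of_gcd_eq_one {ι R : Type*} [CommMonoidWithZero R]
    [NormalizedGCDMonoid R] {s : Finset ι} {f : ι → R} (hf : s.gcd f = 1) {k c : R}
    (h : ∀ i ∈ s, k ∣ c * f i) : k ∣ c := by
  simpa [hf] using (Finset.dvd_gcd h).trans (s.gcd_mul_left' f c).dvd

theorem Finset.natCast_gcd {ι : Type*} (s : Finset ι) (f : ι → ℕ) :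
    ((s.gcd f : ℕ) : ℤ) = s.gcd fun i => (f i : ℤ) := by
  classical
  induction s using Finset.induction with
  | empty => simp
  | insert i s _ ih =>
    rw [Finset.gcd_insert, Finset.gcd_insert, ← ih, ← Int.coe_gcd, Int.gcd_natCast_natCast]
    rfl

section Pi
variable {R ι : Type*} [CommRing R] [DecidableEq ι]

theorem mem_span_image_single_iff (m : ι → R) (S : Finset ι) (z : ι → R) :
    z ∈ span R ((fun i => Pi.single i (m i)) '' (S : Set ι)) ↔
      (∀ i ∉ S, z i = 0) ∧ ∀ i ∈ S, m i ∣ z i := by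
  constructor
  · intro hz
    induction hz using Submodule.span_induction with
    | mem _ hx =>
      obtain ⟨j, hj, rfl⟩ := hx
      refine ⟨fun i hi => Pi.single_eq_of_ne (ne_of_mem_of_not_mem hj hi).symm _, fun i _ => ?_⟩
      by_cases hij : i = j
      · subst hij; simp
      · simp [Pi.single_eq_of_ne hij]
    | zero => simp
    | add x y _ _ hx hy =>
      exact ⟨fun i hi => by simp [hx.1 i hi, hy.1 i hi],
        fun i hi => dvd_add (hx.2 i hi) (hy.2 i hi)⟩
    | smul r x _ hx =>
      exact ⟨fun i hi => by simp [hx.1 i hi], fun i hi => (hx.2 i hi).mul_left r⟩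
  · rintro ⟨hout, hin⟩
    have hz : z = ∑ i ∈ S, Pi.single i (z i) := by
      ext j
      by_cases hj : j ∈ S <;> simp [Finset.sum_apply, hj, hout]
    rw [hz]
    refine Submodule.sum_mem _ fun i hi => ?_
    obtain ⟨c, hc⟩ := hin i hi
    rw [hc, mul_comm, ← smul_eq_mul, Pi.single_smul]
    exact Submodule.smul_mem _ _ (subset_span ⟨i, hi, rfl⟩)

-- `N_I` after shifting indices: `v = β(e₀)`, and `i ∈ S` stands for `e_{i+1}`, of label `m i`.
def shearedLattice (v m : ι → R) (S : Finset ι) : Submodule R (ι → R) :=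
  span R (insert v ((fun i => Pi.single i (m i)) '' (S : Set ι)))

variable {v m : ι → R} {S : Finset ι}

theorem mem_shearedLattice_iff {x : ι → R} :
    x ∈ shearedLattice v m S ↔
      ∃ t : R, (∀ i ∉ S, x i = t * v i) ∧ ∀ i ∈ S, m i ∣ x i - t * v i := by
  rw [shearedLattice, mem_span_insert]
  refine exists_congr fun t => ?_
  have h := mem_span_image_single_iff m S (x - t • v)
  simp only [Pi.sub_apply, Pi.smul_apply, smul_eq_mul, sub_eq_zero] at h
  rw [← h]
  exact ⟨fun ⟨z, hz, hx⟩ => by rwa [hx, add_sub_cancel_left],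
    fun h => ⟨_, h, (add_sub_cancel _ _).symm⟩⟩

theorem single_mem_shearedLattice_sup {b : ι → R} {g : R} (hv : ∀ i ∉ S, v i = g * b i)
    (hcop : ∀ i ∈ S, IsCoprime (v i) (m i)) (hpair : (S : Set ι).Pairwise (IsCoprime on m))
    {i : ι} (hi : i ∈ S) :
    Pi.single i 1 ∈ shearedLattice v m S ⊔ span R {S.piecewise (0 : ι → R) b} := by
  set μ := ∏ j ∈ S.erase i, m j
  obtain ⟨u, r, hur⟩ : IsCoprime (μ * v i) (m i) :=
    (IsCoprime.prod_left fun j hj => hpair (mem_erase.1 hj).2 hi (mem_erase.1 hj).1).mul_left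
      (hcop i hi)
  have hy :
      Pi.single i 1 + (u * μ * g) • S.piecewise (0 : ι → R) b ∈ shearedLattice v m S := by
    refine mem_shearedLattice_iff.2 ⟨u * μ, fun j hj => ?_, fun j hj => ?_⟩
    · simp [piecewise_eq_of_notMem _ _ _ hj,
        Pi.single_eq_of_ne (ne_of_mem_of_not_mem hi hj).symm, hv j hj]
      ring
    · by_cases hji : j = i
      · subst hji
        exact ⟨r, by simp [hj]; linear_combination -hur⟩
      · simpa [hji, hj] using
          ((dvd_prod_of_mem m (mem_erase.2 ⟨hji, hj⟩)).mul_left u).mul_right (v j)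
  have hw := mem_span_singleton_self (R := R) (S.piecewise (0 : ι → R) b)
  simpa using sub_mem (mem_sup_left hy) (mem_sup_right (smul_mem _ (u * μ * g) hw))

end Pi

section Torsion
variable {R ι : Type*} [CommRing R] [IsDomain R] [NormalizedGCDMonoid R] [Fintype ι]
  [DecidableEq ι] {v m b : ι → R} {S : Finset ι} {g : R}

theorem smul_piecewise_mem_shearedLattice_iff (hv : ∀ i ∉ S, v i = g * b i)
    (hb : Sᶜ.gcd b = 1) (hcop : ∀ i ∈ S, IsCoprime (v i) (m i))
    (hpair : (S : Set ι).Pairwise (IsCoprime on m)) (k : R) :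
    k • S.piecewise (0 : ι → R) b ∈ shearedLattice v m S ↔
      (∏ i ∈ S, m i) * g ∣ k := by
  rw [mem_shearedLattice_iff]
  constructor
  · rintro ⟨t, hout, hin⟩
    obtain ⟨i₀, hi₀, hbi₀⟩ : ∃ i ∈ Sᶜ, b i ≠ 0 :=
      gcd_ne_zero_iff.mp (hb ▸ one_ne_zero)
    have hk : k = t * g := by
      rw [mem_compl] at hi₀
      have h := hout i₀ hi₀
      rw [Pi.smul_apply, piecewise_eq_of_notMem _ _ _ hi₀, hv i₀ hi₀, smul_eq_mul,
        ← mul_assoc] at h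
      exact mul_right_cancel₀ hbi₀ h
    have hprod : (∏ i ∈ S, m i) ∣ t := prod_dvd_of_coprime hpair fun i hi =>
      (hcop i hi).symm.dvd_of_dvd_mul_right (by simpa [hi] using hin i hi)
    exact hk ▸ mul_dvd_mul_right hprod g
  · rintro ⟨q, rfl⟩
    refine ⟨(∏ i ∈ S, m i) * q, fun i hi => ?_, fun i hi => ?_⟩
    · simp only [Pi.smul_apply, piecewise_eq_of_notMem _ _ _ hi, hv i hi, smul_eq_mul]
      ring
    · simpa [hi] using ((dvd_prod_of_mem m hi).mul_right q).mul_right (v i)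

theorem mem_shearedLattice_sup_of_smul_mem (hv : ∀ i ∉ S, v i = g * b i)
    (hb : Sᶜ.gcd b = 1) (hcop : ∀ i ∈ S, IsCoprime (v i) (m i))
    (hpair : (S : Set ι).Pairwise (IsCoprime on m)) {k : R} (hk : k ≠ 0) {x : ι → R}
    (hx : k • x ∈ shearedLattice v m S) :
    x ∈ shearedLattice v m S ⊔ span R {S.piecewise (0 : ι → R) b} := by
  obtain ⟨t, hout, -⟩ := mem_shearedLattice_iff.1 hx
  have hout' : ∀ i ∉ S, k * x i = t * g * b i := fun i hi => by
    simpa [hv i hi, mul_assoc] using hout i hi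
  obtain ⟨μ, hμ⟩ : k ∣ t * g := dvd_of_forall_dvd_mul_of_gcd_eq_one hb fun i hi =>
    ⟨x i, (hout' i (mem_compl.1 hi)).symm⟩
  have hS : x - μ • S.piecewise (0 : ι → R) b ∈
      span R ((fun i => Pi.single i (1 : R)) '' (S : Set ι)) := by
    refine (mem_span_image_single_iff (fun _ => 1) S _).2
      ⟨fun i hi => ?_, fun i _ => one_dvd _⟩
    have h := hout' i hi
    rw [hμ, mul_assoc] at h
    simp [hi, mul_left_cancel₀ hk h]
  have hle : span R ((fun i => Pi.single i (1 : R)) '' (S : Set ι)) ≤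
      shearedLattice v m S ⊔ span R {S.piecewise (0 : ι → R) b} :=
    span_le.2 <| by
      rintro _ ⟨i, hi, rfl⟩
      exact single_mem_shearedLattice_sup hv hcop hpair hi
  simpa using add_mem (hle hS) (mem_sup_right (smul_mem _ μ (mem_span_singleton_self _)))

theorem torsion_quotient_shearedLattice (hv : ∀ i ∉ S, v i = g * b i)
    (hb : Sᶜ.gcd b = 1) (hcop : ∀ i ∈ S, IsCoprime (v i) (m i))
    (hpair : (S : Set ι).Pairwise (IsCoprime on m)) (hn : (∏ i ∈ S, m i) * g ≠ 0) :
    torsion R ((ι → R) ⧸ shearedLattice v m S) =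
      span R {(shearedLattice v m S).mkQ (S.piecewise (0 : ι → R) b)} := by
  apply le_antisymm
  · rintro x' ⟨⟨k, hk⟩, hkx⟩
    obtain ⟨x, rfl⟩ := (shearedLattice v m S).mkQ_surjective x'
    have hx : x ∈ shearedLattice v m S ⊔ span R {S.piecewise (0 : ι → R) b} :=
      mem_shearedLattice_sup_of_smul_mem hv hb hcop hpair (nonZeroDivisors.ne_zero hk)
        ((Submodule.Quotient.mk_eq_zero _).1 hkx)
    rwa [← comap_map_mkQ, map_span, Set.image_singleton] at hx
  · rw [span_le, Set.singleton_subset_iff]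
    refine ⟨⟨_, mem_nonZeroDivisors_of_ne_zero hn⟩, ?_⟩
    rw [Submonoid.mk_smul, ← map_smul]
    exact (Submodule.Quotient.mk_eq_zero _).2
      ((smul_piecewise_mem_shearedLattice_iff hv hb hcop hpair _).2 dvd_rfl)

theorem torsionOf_mkQ_piecewise (hv : ∀ i ∉ S, v i = g * b i)
    (hb : Sᶜ.gcd b = 1) (hcop : ∀ i ∈ S, IsCoprime (v i) (m i))
    (hpair : (S : Set ι).Pairwise (IsCoprime on m)) :
    Ideal.torsionOf R _ ((shearedLattice v m S).mkQ (S.piecewise (0 : ι → R) b)) =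
      Ideal.span {(∏ i ∈ S, m i) * g} := by
  ext k
  rw [Ideal.mem_torsionOf_iff, Ideal.mem_span_singleton,
    ← smul_piecewise_mem_shearedLattice_iff hv hb hcop hpair, ← map_smul]
  exact Submodule.Quotient.mk_eq_zero _

noncomputable def torsionQuotientShearedLatticeEquiv (hv : ∀ i ∉ S, v i = g * b i)
    (hb : Sᶜ.gcd b = 1) (hcop : ∀ i ∈ S, IsCoprime (v i) (m i))
    (hpair : (S : Set ι).Pairwise (IsCoprime on m)) (hn : (∏ i ∈ S, m i) * g ≠ 0) :
    torsion R ((ι → R) ⧸ shearedLattice v m S) ≃ₗ[R]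
      R ⧸ Ideal.span {(∏ i ∈ S, m i) * g} :=
  (LinearEquiv.ofEq _ _ (torsion_quotient_shearedLattice hv hb hcop hpair hn)).trans <|
    (Ideal.quotTorsionOfEquivSpanSingleton R _ _).symm.trans <|
      quotEquivOfEq _ _ (torsionOf_mkQ_piecewise hv hb hcop hpair)

end Torsion

section Fin
variable {d : ℕ}

def succPreimage (I : Finset (Fin (d + 1))) : Finset (Fin d) := {i | i.succ ∈ I}

@[simp]
theorem mem_succPreimage {I : Finset (Fin (d + 1))} {i : Fin d} :
    i ∈ succPreimage I ↔ i.succ ∈ I := by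
  simp [succPreimage]

theorem insert_zero_map_succPreimage {I : Finset (Fin (d + 1))} (h0 : 0 ∈ I) :
    insert 0 ((succPreimage I).map (Fin.succEmb d)) = I := by
  ext j
  cases j using Fin.cases <;> simp [h0, Fin.succ_ne_zero]

theorem map_compl_succPreimage {I : Finset (Fin (d + 1))} (h0 : 0 ∈ I) :
    (succPreimage I)ᶜ.map (Fin.succEmb d) = Iᶜ := by
  ext j
  cases j using Fin.cases <;> simp [h0, Fin.succ_ne_zero]

theorem prod_eq_mul_prod_succPreimage {M : Type*} [CommMonoid M] {I : Finset (Fin (d + 1))}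
    (h0 : 0 ∈ I) (f : Fin (d + 1) → M) :
    ∏ j ∈ I, f j = f 0 * ∏ i ∈ succPreimage I, f i.succ := by
  conv_lhs => rw [← insert_zero_map_succPreimage h0]
  rw [prod_insert (by simp [Fin.succ_ne_zero]), prod_map]
  rfl

theorem gcd_compl_aExt {I : Finset (Fin (d + 1))} (h0 : 0 ∈ I) (a : Fin d → ℕ) :
    Iᶜ.gcd (aExt d a) = (succPreimage I)ᶜ.gcd a := by
  rw [← map_compl_succPreimage h0, map_eq_image, gcd_image]
  rfl

end Fin

theorem span_shearedMatrix_columns {d : ℕ} (m : Fin (d + 1) → ℕ) (a : Fin d → ℕ)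
    {I : Finset (Fin (d + 1))} (h0 : 0 ∈ I) :
    span ℤ ((fun j => Matrix.toLin' (shearedMatrix d m a) (Pi.single j 1)) '' I) =
      shearedLattice (fun i => -((m 0 : ℤ) * a i)) (fun i => (m i.succ : ℤ))
        (succPreimage I) := by
  conv_lhs => rw [← insert_zero_map_succPreimage h0]
  rw [shearedLattice, coe_insert, Set.image_insert_eq, coe_map, Set.image_image]
  congr 3
  · ext i; simp [shearedMatrix]
  · ext i j
    simp [shearedMatrix, Fin.succ_ne_zero, Pi.single_apply, eq_comm]

theorem natCast_prod_mul_gcd_aExt {d : ℕ} (m : Fin (d + 1) → ℕ) (a : Fin d → ℕ)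
    {I : Finset (Fin (d + 1))} (h0 : 0 ∈ I) :
    (((∏ i ∈ I, m i) * Iᶜ.gcd (aExt d a) : ℕ) : ℤ) =
      (∏ i ∈ succPreimage I, (m i.succ : ℤ)) *
        (m 0 * (succPreimage I)ᶜ.gcd fun i => (a i : ℤ)) := by
  rw [prod_eq_mul_prod_succPreimage h0, gcd_compl_aExt h0]
  push_cast [natCast_gcd]
  ring

theorem stmt_16_general (d : ℕ) (m : Fin (d + 1) → ℕ) (a : Fin d → ℕ)
    (hm : ∀ i, 0 < m i) (ha : ∀ i, 0 < a i)
    (hcop : ∀ i j, i ≠ j → Nat.Coprime (m i) (m j))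
    (hcop' : ∀ i : Fin d, Nat.Coprime (a i) (m i.succ))
    (I : Finset (Fin (d + 1))) (h0 : 0 ∈ I) (hI : I ≠ Finset.univ) :
    Nonempty
      ((Submodule.torsion ℤ ((Fin d → ℤ) ⧸ Submodule.span ℤ
          ((fun i : Fin (d + 1) => Matrix.toLin' (shearedMatrix d m a) (Pi.single i 1)) '' I)))
        ≃+ ZMod ((∏ i ∈ I, m i) * Iᶜ.gcd (aExt d a))) := by
  set S := succPreimage I
  have hS : Sᶜ.Nonempty := by
    rwa [← map_nonempty, map_compl_succPreimage h0, nonempty_iff_ne_empty, Ne, compl_eq_empty_iff]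
  obtain ⟨b, hab, hb⟩ := extract_gcd (fun i => (a i : ℤ)) hS
  set g : ℤ := -(m 0 * Sᶜ.gcd fun i => (a i : ℤ))
  have hv (i : Fin d) (hi : i ∉ S) : -((m 0 : ℤ) * a i) = g * b i := by
    rw [hab i (mem_compl.2 hi)]
    ring
  have hcopS (i : Fin d) (_ : i ∈ S) : IsCoprime (-((m 0 : ℤ) * a i)) (m i.succ) :=
    ((Nat.isCoprime_iff_coprime.2 (hcop 0 i.succ (Fin.succ_ne_zero i).symm)).mul_left
      (Nat.isCoprime_iff_coprime.2 (hcop' i))).neg_left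
  have hpair : (S : Set (Fin d)).Pairwise (IsCoprime on fun i => (m i.succ : ℤ)) :=
    fun i _ j _ hij => Nat.isCoprime_iff_coprime.2 (hcop _ _ ((Fin.succ_injective _).ne hij))
  have hn : (∏ i ∈ S, (m i.succ : ℤ)) * g =
      -(((∏ i ∈ I, m i) * Iᶜ.gcd (aExt d a) : ℕ) : ℤ) := by
    rw [natCast_prod_mul_gcd_aExt m a h0, mul_neg]
  have hn0 : (∏ i ∈ S, (m i.succ : ℤ)) * g ≠ 0 := by
    rw [hn, neg_ne_zero, Nat.cast_ne_zero, gcd_compl_aExt h0]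
    obtain ⟨i, hi⟩ := hS
    exact mul_ne_zero (prod_ne_zero_iff.2 fun j _ => (hm j).ne')
      (gcd_ne_zero_iff.2 ⟨i, hi, (ha i).ne'⟩)
  rw [span_shearedMatrix_columns m a h0, ← Int.natAbs_natCast (_ * _), ← Int.natAbs_neg, ← hn]
  exact ⟨(torsionQuotientShearedLatticeEquiv hv hb hcopS hpair hn0).toAddEquiv.trans
    (Int.quotientSpanEquivZMod _).toAddEquiv⟩

/-- For a labelled sheared simplex satisfying the weighted-projective condition
(the `m_i` pairwise coprime and `gcd(a_i, m_i) = 1`), for `I ∋ 0` a proper nonempty subset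
of `{0,…,d}`, the torsion subgroup of `ℤ^d/N_I` is cyclic of order `d_I·∏_{i∈I} m_i`. -/
theorem stmt_16 (d : ℕ) (m : Fin (d + 1) → ℕ) (a : Fin d → ℕ)
    (hm : ∀ i, 0 < m i) (ha : ∀ i, 0 < a i)
    (hprim : Finset.univ.gcd a = 1)
    (hcop : ∀ i j, i ≠ j → Nat.Coprime (m i) (m j))
    (hcop' : ∀ i : Fin d, Nat.Coprime (a i) (m i.succ))
    (I : Finset (Fin (d + 1))) (h0 : 0 ∈ I) (hI : I ≠ Finset.univ) :
    Nonempty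
      ((Submodule.torsion ℤ ((Fin d → ℤ) ⧸ Submodule.span ℤ
          ((fun i : Fin (d + 1) => Matrix.toLin' (shearedMatrix d m a) (Pi.single i 1)) '' I)))
        ≃+ ZMod ((∏ i ∈ I, m i) * Iᶜ.gcd (aExt d a))) :=
  stmt_16_general d m a hm ha hcop hcop' I h0 hI
end

section
/- Let a = (a₁,…,a_d) be a primitive vector of positive integers and m₀,…,m_d positive integers defining β : ℤ^(d+1) → ℤ^d by β(e₀) = -m₀a, β(e_j) = m_jε_j. For j ∈ {0,…,d} let N_j ⊆ ℤ^d be the subgroup generated by {β(e_i) : i ≠ j}. Then all the N_j (j = 0,…,d) are equal to the image of β if and only if m_i = m₀·a_i for all i = 1,…,d. -/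
open Matrix

/-- For a labelled sheared simplex with primitive vector `a = (a₁,…,a_d)`, letting
`N_j = span{β(e_i) : i ≠ j}`, all the `N_j` equal the image of `β` if and only if
`m_i = m₀·a_i` for all `i = 1,…,d`. -/
theorem stmt_17 (d : ℕ) (m : Fin (d + 1) → ℕ) (a : Fin d → ℕ)
    (hm : ∀ i, 0 < m i) (ha : ∀ i, 0 < a i)
    (hprim : Finset.univ.gcd a = 1) :
    (∀ j : Fin (d + 1),
        Submodule.span ℤ
          ((fun i : Fin (d + 1) => Matrix.toLin' (shearedMatrix d m a) (Pi.single i 1))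
            '' {i | i ≠ j})
          = LinearMap.range (Matrix.toLin' (shearedMatrix d m a)))
      ↔ ∀ i : Fin d, m i.succ = m 0 * a i := by
  set M := shearedMatrix d m a with hM
  set f := Matrix.toLin' M with hf
  set col : Fin (d+1) → (Fin d → ℤ) := fun j => f (Pi.single j 1) with hcoldef
  have hcol : ∀ j, col j = fun r => M r j := by
    intro j; funext r
    simp [hcoldef, hf, Matrix.toLin'_apply]
  have hc0 : ∀ r, M r 0 = -((m 0 : ℤ) * (a r : ℤ)) := by
    intro r; simp [hM, shearedMatrix]
  have hcs : ∀ (i : Fin d) (r : Fin d),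
      M r i.succ = if i = r then (m i.succ : ℤ) else 0 := by
    intro i r
    simp [hM, shearedMatrix, Fin.succ_ne_zero, Fin.succ_inj, eq_comm]
  have hrange : LinearMap.range f = Submodule.span ℤ (Set.range col) := by
    rw [hf, Matrix.range_toLin']
    congr 1
    ext x
    constructor
    · rintro ⟨j, rfl⟩; exact ⟨j, by rw [hcol]; rfl⟩
    · rintro ⟨j, rfl⟩; exact ⟨j, by rw [hcol]; rfl⟩
  constructor
  · intro h i
    -- divisibility 1 : m 0 * a i ∣ m i.succ, from h i.succ
    have mem1 : col i.succ ∈ Submodule.span ℤ (col '' {k | k ≠ i.succ}) := by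
      rw [h i.succ]; exact ⟨Pi.single i.succ 1, rfl⟩
    have mem1' : (m i.succ : ℤ) ∈ Submodule.span ℤ ({-((m 0 : ℤ) * a i)} : Set ℤ) := by
      have := Submodule.mem_map_of_mem (f := LinearMap.proj (R := ℤ) (φ := fun _ : Fin d => ℤ) i) mem1
      rw [Submodule.map_span] at this
      have hle : Submodule.span ℤ ((LinearMap.proj (R := ℤ) (φ := fun _ : Fin d => ℤ) i) '' (col '' {k | k ≠ i.succ}))
          ≤ Submodule.span ℤ ({-((m 0 : ℤ) * a i)} : Set ℤ) := by
        rw [Submodule.span_le]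
        rintro x ⟨y, ⟨k, hk, rfl⟩, rfl⟩
        simp only [LinearMap.proj_apply]
        induction k using Fin.cases with
        | zero => rw [hcol]; simp only [hc0]; exact Submodule.subset_span rfl
        | succ t =>
          rw [hcol]; simp only [hcs]
          have ht : t ≠ i := fun e => hk (by rw [e])
          rw [if_neg ht]
          exact Submodule.zero_mem _
      have e : (LinearMap.proj (R := ℤ) (φ := fun _ : Fin d => ℤ) i) (col i.succ) = (m i.succ : ℤ) := by
        rw [hcol]; simp [hcs]
      rw [e] at this
      exact hle this
    rw [Submodule.mem_span_singleton] at mem1'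
    obtain ⟨t, ht⟩ := mem1'
    rw [smul_eq_mul] at ht
    have d1 : ((m 0 * a i : ℕ) : ℤ) ∣ (m i.succ : ℤ) :=
      ⟨-t, by push_cast; linear_combination -ht⟩
    -- divisibility 2 : m i.succ ∣ m 0 * a i, from h 0
    have mem2 : col 0 ∈ Submodule.span ℤ (col '' {k | k ≠ 0}) := by
      rw [h 0]; exact ⟨Pi.single 0 1, rfl⟩
    have mem2' : -((m 0 : ℤ) * a i) ∈ Submodule.span ℤ ({(m i.succ : ℤ)} : Set ℤ) := by
      have := Submodule.mem_map_of_mem (f := LinearMap.proj (R := ℤ) (φ := fun _ : Fin d => ℤ) i) mem2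
      rw [Submodule.map_span] at this
      have hle : Submodule.span ℤ ((LinearMap.proj (R := ℤ) (φ := fun _ : Fin d => ℤ) i) '' (col '' {k | k ≠ 0}))
          ≤ Submodule.span ℤ ({(m i.succ : ℤ)} : Set ℤ) := by
        rw [Submodule.span_le]
        rintro x ⟨y, ⟨k, hk, rfl⟩, rfl⟩
        simp only [LinearMap.proj_apply]
        induction k using Fin.cases with
        | zero => exact absurd rfl hk
        | succ t =>
          rw [hcol]; simp only [hcs]
          by_cases ht : t = i
          · subst ht; rw [if_pos rfl]; exact Submodule.subset_span rfl
          · rw [if_neg ht]; exact Submodule.zero_mem _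
      have e : (LinearMap.proj (R := ℤ) (φ := fun _ : Fin d => ℤ) i) (col 0) = -((m 0 : ℤ) * a i) := by
        rw [hcol]; simp [hc0]
      rw [e] at this
      exact hle this
    rw [Submodule.mem_span_singleton] at mem2'
    obtain ⟨s, hs⟩ := mem2'
    rw [smul_eq_mul] at hs
    have d2 : ((m i.succ : ℕ) : ℤ) ∣ ((m 0 * a i : ℕ) : ℤ) :=
      ⟨-s, by push_cast; linear_combination hs⟩
    rw [Int.natCast_dvd_natCast] at d1 d2
    exact Nat.dvd_antisymm d2 d1
  · intro h j
    have hsum : col 0 + ∑ i : Fin d, col i.succ = 0 := by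
      funext r
      simp only [Pi.add_apply, Finset.sum_apply, Pi.zero_apply, hcol, hc0, hcs]
      rw [Finset.sum_ite_eq' Finset.univ r (fun c => ((m c.succ : ℤ)))]
      simp only [Finset.mem_univ, if_true]
      push_cast [h r]
      ring
    have key : ∀ k, col k ∈ Submodule.span ℤ (col '' {l | l ≠ k}) := by
      intro k
      induction k using Fin.cases with
      | zero =>
        have : col 0 = -∑ i : Fin d, col i.succ := by
          rw [eq_neg_iff_add_eq_zero]; exact hsum
        rw [this]
        refine Submodule.neg_mem _ (Submodule.sum_mem _ fun i _ => ?_)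
        exact Submodule.subset_span ⟨i.succ, Fin.succ_ne_zero i, rfl⟩
      | succ t =>
        have hsplit : ∑ i : Fin d, col i.succ
            = col t.succ + ∑ i ∈ Finset.univ.erase t, col i.succ :=
          (Finset.add_sum_erase _ _ (Finset.mem_univ t)).symm
        have : col t.succ = -(col 0) - ∑ i ∈ Finset.univ.erase t, col i.succ := by
          have h2 := hsum
          rw [hsplit] at h2
          linear_combination (norm := abel) h2
        rw [this]
        refine Submodule.sub_mem _ (Submodule.neg_mem _ ?_) (Submodule.sum_mem _ fun i hi => ?_)
        · exact Submodule.subset_span ⟨0, (Fin.succ_ne_zero t).symm, rfl⟩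
        · refine Submodule.subset_span ⟨i.succ, ?_, rfl⟩
          exact fun e => (Finset.mem_erase.mp hi).1 (Fin.succ_inj.mp e)
    rw [hrange]
    refine le_antisymm (Submodule.span_mono (Set.image_subset_range _ _)) ?_
    rw [Submodule.span_le]
    rintro x ⟨k, rfl⟩
    by_cases hk : k = j
    · subst hk; exact key k
    · exact Submodule.subset_span ⟨k, hk, rfl⟩
end

section
/- Let β : ℤ³ → ℤ² be given by the matrix [[-2,3,0],[-2,0,5]]. Then (a) coker(β^T) ≅ ℤ via [a,b,c] ↦ 15a + 10b + 6c; (b) for N_z = span{(0,5),(-2,-2)} ⊆ ℤ², the torsion subgroup of ℤ²/N_z is cyclic of order 10; (c) for N_w = span{(-2,-2)}, the torsion subgroup of ℤ²/N_w is cyclic of order 2. -/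
open Matrix

/-! ### Auxiliary definitions and lemmas -/

section Aux

/-- The linear functional `v ↦ 15 v₀ + 10 v₁ + 6 v₂` on `ℤ³`. -/
noncomputable def fA : (Fin 3 → ℤ) →ₗ[ℤ] ℤ :=
  15 • LinearMap.proj 0 + 10 • LinearMap.proj 1 + 6 • LinearMap.proj 2

lemma fA_apply (v : Fin 3 → ℤ) : fA v = 15 * v 0 + 10 * v 1 + 6 * v 2 := by
  simp [fA]

lemma hleA : LinearMap.range (Matrix.toLin' (!![(-2 : ℤ), 3, 0; -2, 0, 5]ᵀ)) ≤
    LinearMap.ker fA := by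
  rintro x ⟨u, rfl⟩
  simp [fA, Matrix.toLin'_apply, Matrix.mulVec, dotProduct, Fin.sum_univ_two,
    Matrix.transpose_apply, Matrix.vecHead, Matrix.vecTail]
  ring

noncomputable def phiA : ((Fin 3 → ℤ) ⧸ LinearMap.range
    (Matrix.toLin' (!![(-2 : ℤ), 3, 0; -2, 0, 5]ᵀ))) →ₗ[ℤ] ℤ :=
  Submodule.liftQ _ fA hleA

lemma phiA_bij : Function.Bijective phiA := by
  constructor
  · rw [injective_iff_map_eq_zero]
    intro q hq
    obtain ⟨v, rfl⟩ := Submodule.Quotient.mk_surjective _ q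
    rw [Submodule.Quotient.mk_eq_zero]
    have h : 15 * v 0 + 10 * v 1 + 6 * v 2 = 0 := by
      have := hq; rwa [phiA, Submodule.liftQ_apply, fA_apply] at this
    refine ⟨![-(5 * v 0 + 3 * v 1 + 2 * v 2), 12 * v 0 + 8 * v 1 + 5 * v 2], ?_⟩
    funext i
    fin_cases i <;>
      simp [Matrix.toLin'_apply, Matrix.mulVec, dotProduct, Fin.sum_univ_two,
        Matrix.transpose_apply, Matrix.vecHead, Matrix.vecTail] <;> omega
  · intro n
    refine ⟨Submodule.Quotient.mk (n • ![1, 1, -4]), ?_⟩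
    rw [phiA, Submodule.liftQ_apply, fA_apply]
    simp
    ring

/-- The linear map `ℤ² → ZMod 10`, `v ↦ -v₀ + 6 v₁`. -/
noncomputable def gB : (Fin 2 → ℤ) →ₗ[ℤ] ZMod 10 :=
  (Int.castAddHom (ZMod 10)).toIntLinearMap.comp
    ((-1 : ℤ) • LinearMap.proj 0 + (6 : ℤ) • LinearMap.proj 1)

lemma gB_apply (v : Fin 2 → ℤ) : gB v = ((-(v 0) + 6 * v 1 : ℤ) : ZMod 10) := by
  simp [gB]

lemma memNz (v : Fin 2 → ℤ) (h2 : 2 ∣ v 0) (h5 : 5 ∣ (v 1 - v 0)) :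
    v ∈ Submodule.span ℤ ({![(0 : ℤ), 5], ![(-2 : ℤ), -2]} : Set (Fin 2 → ℤ)) := by
  obtain ⟨y, hy⟩ := h2
  obtain ⟨x, hx⟩ := h5
  have hv : v = x • ![(0 : ℤ), 5] + (-y) • ![(-2 : ℤ), -2] := by
    funext i; fin_cases i <;> simp <;> omega
  rw [hv]
  exact Submodule.add_mem _
    (Submodule.smul_mem _ _ (Submodule.subset_span (Set.mem_insert _ _)))
    (Submodule.smul_mem _ _ (Submodule.subset_span (Set.mem_insert_of_mem _ rfl)))

lemma hleB : Submodule.span ℤ ({![(0 : ℤ), 5], ![(-2 : ℤ), -2]} : Set (Fin 2 → ℤ)) ≤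
    LinearMap.ker gB := by
  rw [Submodule.span_le]
  rintro x (rfl | rfl) <;> · simp [gB_apply]; decide

noncomputable def phiB : ((Fin 2 → ℤ) ⧸ Submodule.span ℤ
    ({![(0 : ℤ), 5], ![(-2 : ℤ), -2]} : Set (Fin 2 → ℤ))) →ₗ[ℤ] ZMod 10 :=
  Submodule.liftQ _ gB hleB

lemma phiB_bij : Function.Bijective phiB := by
  constructor
  · rw [injective_iff_map_eq_zero]
    intro q hq
    obtain ⟨v, rfl⟩ := Submodule.Quotient.mk_surjective _ q
    rw [Submodule.Quotient.mk_eq_zero]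
    have h : ((-(v 0) + 6 * v 1 : ℤ) : ZMod 10) = 0 := by
      rwa [phiB, Submodule.liftQ_apply, gB_apply] at hq
    rw [ZMod.intCast_zmod_eq_zero_iff_dvd] at h
    have h' : (10 : ℤ) ∣ (-(v 0) + 6 * v 1) := by exact_mod_cast h
    exact memNz v (by omega) (by omega)
  · intro z
    refine ⟨Submodule.Quotient.mk ((z.val : ℤ) • ![(-1 : ℤ), 0]), ?_⟩
    rw [phiB, Submodule.liftQ_apply, gB_apply]
    simp [ZMod.natCast_val, ZMod.intCast_cast, ZMod.cast_id]

lemma torsionB_top : Submodule.torsion ℤ ((Fin 2 → ℤ) ⧸ Submodule.span ℤ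
    ({![(0 : ℤ), 5], ![(-2 : ℤ), -2]} : Set (Fin 2 → ℤ))) = ⊤ := by
  rw [eq_top_iff]
  intro x _
  refine ⟨⟨10, mem_nonZeroDivisors_of_ne_zero (by norm_num)⟩, ?_⟩
  have hinj := phiB_bij.1
  apply hinj
  show phiB ((10 : ℤ) • x) = phiB 0
  rw [_root_.map_smul, map_zero, zsmul_eq_mul]
  exact mul_eq_zero_of_left (by decide) _

/-- The linear map `ℤ² → ZMod 2`, `v ↦ v₀`. -/
noncomputable def gC : (Fin 2 → ℤ) →ₗ[ℤ] ZMod 2 :=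
  (Int.castAddHom (ZMod 2)).toIntLinearMap.comp (LinearMap.proj 0)

lemma gC_apply (v : Fin 2 → ℤ) : gC v = ((v 0 : ℤ) : ZMod 2) := by simp [gC]

lemma hleC : Submodule.span ℤ ({![(-2 : ℤ), -2]} : Set (Fin 2 → ℤ)) ≤ LinearMap.ker gC := by
  rw [Submodule.span_le]
  rintro x rfl
  simp [gC_apply]; decide

noncomputable def phiC : ((Fin 2 → ℤ) ⧸ Submodule.span ℤ
    ({![(-2 : ℤ), -2]} : Set (Fin 2 → ℤ))) →ₗ[ℤ] ZMod 2 :=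
  Submodule.liftQ _ gC hleC

noncomputable def tC : (Submodule.torsion ℤ ((Fin 2 → ℤ) ⧸ Submodule.span ℤ
    ({![(-2 : ℤ), -2]} : Set (Fin 2 → ℤ)))) →+ ZMod 2 :=
  phiC.toAddMonoidHom.comp (Submodule.torsion ℤ _).subtype.toAddMonoidHom

lemma tC_bij : Function.Bijective tC := by
  constructor
  · rw [injective_iff_map_eq_zero]
    rintro ⟨q, hq⟩ h0
    obtain ⟨v, rfl⟩ := Submodule.Quotient.mk_surjective _ q
    obtain ⟨⟨n, hn⟩, hnq⟩ := hq
    have hne : n ≠ 0 := by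
      intro h; rw [h] at hn; exact zero_notMem_nonZeroDivisors hn
    have hnq' : (Submodule.Quotient.mk (n • v) : (Fin 2 → ℤ) ⧸ Submodule.span ℤ
        ({![(-2 : ℤ), -2]} : Set (Fin 2 → ℤ))) = 0 := by
      rw [Submodule.Quotient.mk_smul]
      exact hnq
    rw [Submodule.Quotient.mk_eq_zero, Submodule.mem_span_singleton] at hnq'
    obtain ⟨c, hc⟩ := hnq'
    have h01 : v 0 = v 1 := by
      have h0' := congrFun hc 0
      have h1' := congrFun hc 1
      simp [Pi.smul_apply] at h0' h1'
      have : n * v 0 = n * v 1 := by omega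
      exact mul_left_cancel₀ hne this
    have h2 : (2 : ℤ) ∣ v 0 := by
      have := h0
      rw [tC] at this
      simp only [AddMonoidHom.coe_comp, Function.comp_apply] at this
      have : phiC (Submodule.Quotient.mk v) = 0 := this
      rw [phiC, Submodule.liftQ_apply, gC_apply, ZMod.intCast_zmod_eq_zero_iff_dvd] at this
      exact_mod_cast this
    apply Subtype.ext
    show (Submodule.Quotient.mk v : _) = 0
    rw [Submodule.Quotient.mk_eq_zero, Submodule.mem_span_singleton]
    obtain ⟨y, hy⟩ := h2
    refine ⟨-y, ?_⟩
    funext i; fin_cases i <;> simp <;> omega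
  · intro z
    have hz : z = 0 ∨ z = 1 := by
      fin_cases z
      · exact Or.inl rfl
      · exact Or.inr rfl
    have htor : (Submodule.Quotient.mk ![(1 : ℤ), 1] : (Fin 2 → ℤ) ⧸ Submodule.span ℤ
        ({![(-2 : ℤ), -2]} : Set (Fin 2 → ℤ))) ∈ Submodule.torsion ℤ _ := by
      refine ⟨⟨2, mem_nonZeroDivisors_of_ne_zero (by norm_num)⟩, ?_⟩
      have h2 : ((2 : ℤ) • (Submodule.Quotient.mk ![(1 : ℤ), 1]) : (Fin 2 → ℤ) ⧸
          Submodule.span ℤ ({![(-2 : ℤ), -2]} : Set (Fin 2 → ℤ))) = 0 := by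
        rw [← Submodule.Quotient.mk_smul, Submodule.Quotient.mk_eq_zero,
          Submodule.mem_span_singleton]
        exact ⟨-1, by funext i; fin_cases i <;> simp⟩
      exact h2
    rcases hz with rfl | rfl
    · exact ⟨0, map_zero _⟩
    · refine ⟨⟨_, htor⟩, ?_⟩
      show phiC (Submodule.Quotient.mk ![(1 : ℤ), 1]) = 1
      rw [phiC, Submodule.liftQ_apply, gC_apply]
      decide

end Aux

/-- For `β : ℤ³ → ℤ²` with matrix `[[-2,3,0],[-2,0,5]]`:
(a) `coker(βᵀ) ≅ ℤ` via `[a,b,c] ↦ 15a + 10b + 6c`;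
(b) for `N_z = span{(0,5), (-2,-2)}`, the torsion subgroup of `ℤ²/N_z` is cyclic of order 10;
(c) for `N_w = span{(-2,-2)}`, the torsion subgroup of `ℤ²/N_w` is cyclic of order 2. -/
theorem stmt_19 :
    (∃ e : ((Fin 3 → ℤ) ⧸ LinearMap.range
        (Matrix.toLin' (!![(-2 : ℤ), 3, 0; -2, 0, 5]ᵀ))) ≃+ ℤ,
      ∀ v : Fin 3 → ℤ,
        e (Submodule.Quotient.mk v) = 15 * v 0 + 10 * v 1 + 6 * v 2) ∧
    Nonempty ((Submodule.torsion ℤ ((Fin 2 → ℤ) ⧸ Submodule.span ℤ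
        {![(0 : ℤ), 5], ![(-2 : ℤ), -2]})) ≃+ ZMod 10) ∧
    Nonempty ((Submodule.torsion ℤ ((Fin 2 → ℤ) ⧸ Submodule.span ℤ
        {![(-2 : ℤ), -2]})) ≃+ ZMod 2) := by
  refine ⟨⟨AddEquiv.ofBijective phiA.toAddMonoidHom phiA_bij, fun v => ?_⟩, ⟨?_⟩, ⟨?_⟩⟩
  · show phiA (Submodule.Quotient.mk v) = _
    rw [phiA, Submodule.liftQ_apply, fA_apply]
  · exact ((LinearEquiv.ofTop _ torsionB_top).toAddEquiv).trans
      (AddEquiv.ofBijective phiB.toAddMonoidHom phiB_bij)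
  · exact AddEquiv.ofBijective tC tC_bij
end
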